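/- arXiv:2208.09935 — 6 statements merged into one kernel-verified Lean document; each statement's English description precedes it below -/
import Mathlib

section
/- Let V be a valuation domain with field of fractions K, valuation v, and value group Γ, and let ℚΓ denote the divisible hull of Γ. For every nonzero polynomial f ∈ K[x] there exist an integer k ≥ 1, natural numbers c_1 > c_2 > ⋯ > c_k, elements β_1, …, β_k ∈ Γ, and elements δ_1 < δ_2 < ⋯ < δ_{k−1} of ℚΓ such that for all γ ∈ ℚΓ: minval_f(γ) = c_1 γ + β_1 for γ ≤ δ_1; minval_f(γ) = c_i γ + β_i for δ_{i−1} ≤ γ ≤ δ_i (2 ≤ i ≤ k−1); and minval_f(γ) = c_k γ + β_k for γ ≥ δ_{k−1}. Moreover, if t ∈ K satisfies v(t) = δ_i for some i ∈ {1,…,k−1}, and j_{i,1} < ⋯ < j_{i,s_i} are the degrees of the monomials appearing with nonzero coefficient in the local polynomial loc_{f,t}, then c_{i+1} = j_{i,1} and c_i = j_{i,s_i}. -/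
open Polynomial

/-- An (additive) valuation `v : K → Γ ∪ {∞}` on a field `K` with value group `Γ`
(surjectivity onto `Γ` makes `Γ` the value group). -/
structure AddVal (K : Type*) [Field K] (Γ : Type*) [AddCommGroup Γ] [LinearOrder Γ] [IsOrderedAddMonoid Γ] where
  v : K → WithTop Γ
  v_eq_top_iff : ∀ x : K, v x = ⊤ ↔ x = 0
  v_mul : ∀ x y : K, v (x * y) = v x + v y
  v_one : v 1 = 0
  v_min_le_add : ∀ x y : K, min (v x) (v y) ≤ v (x + y)
  v_surj : ∀ γ : Γ, ∃ x : K, v x = (γ : WithTop Γ)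

variable {K : Type*} [Field K] {Γ : Type*} [AddCommGroup Γ] [LinearOrder Γ] [IsOrderedAddMonoid Γ]

/-- The minimum valuation function of a nonzero polynomial:
`minval_f(γ) = min {v(a_i) + i·γ : 0 ≤ i ≤ deg f}`. -/
noncomputable def minval (w : AddVal K Γ) (f : Polynomial K) (γ : Γ) : WithTop Γ :=
  (Finset.range (f.natDegree + 1)).inf fun i => w.v (f.coeff i) + ((i • γ : Γ) : WithTop Γ)

variable {Γ' : Type*} [AddCommGroup Γ'] [LinearOrder Γ'] [IsOrderedAddMonoid Γ']

/-- The minimum valuation function viewed on the divisible hull `Γ'` of `Γ`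
(via the order embedding `ι : Γ → Γ'`). -/
noncomputable def minvalQ (w : AddVal K Γ) (ι : Γ →+ Γ') (f : Polynomial K) (γ : Γ') :
    WithTop Γ' :=
  (Finset.range (f.natDegree + 1)).inf fun i =>
    (w.v (f.coeff i)).map ι + ((i • γ : Γ') : WithTop Γ')


section Envelope

variable {G : Type*} [AddCommGroup G] [LinearOrder G] [IsOrderedAddMonoid G]

private lemma nsmul_sub' {m n : ℕ} (h : m ≤ n) (γ : G) : (n - m) • γ = n • γ - m • γ := by
  rw [eq_sub_iff_add_eq, ← add_nsmul, Nat.sub_add_cancel h]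

private lemma seg_le {m n : ℕ} (h : m ≤ n) (a b γ : G) :
    a + m • γ ≤ b + n • γ ↔ a - b ≤ (n - m) • γ := by
  rw [nsmul_sub' h γ, sub_le_sub_iff, add_comm (n • γ) b]

private lemma seg_le' {m n : ℕ} (h : m ≤ n) (a b γ : G) :
    b + n • γ ≤ a + m • γ ↔ (n - m) • γ ≤ a - b := by
  rw [nsmul_sub' h γ, sub_le_sub_iff, add_comm (n • γ) b]

private lemma key {j jj : ℕ} (hjj : j < jj) {a b γ d : G} (hγd : γ < d)
    (h1 : a + j • γ ≤ b + jj • γ) (h2 : b + jj • d ≤ a + j • d) : False := by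
  have e1 : a - b ≤ (jj - j) • γ := (seg_le hjj.le a b γ).mp h1
  have e2 : (jj - j) • d ≤ a - b := (seg_le' hjj.le a b d).mp h2
  have : d ≤ γ := le_of_nsmul_le_nsmul_right (by omega) (e2.trans e1)
  exact absurd this (not_le.2 hγd)

private lemma envelope (e : G) (he : 0 < e)
    (hdiv : ∀ (δ : G) (n : ℕ), 0 < n → ∃ ε : G, n • ε = δ) (B : ℕ → G) :
    ∀ S : Finset ℕ, S.Nonempty →
    ∃ (k : ℕ) (c : ℕ → ℕ) (δ : ℕ → G),
      1 ≤ k ∧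
      (∀ i, i < k → c i ∈ S) ∧
      (∀ i j, i < j → j < k → c j < c i) ∧
      (∀ i j, i < j → j < k - 1 → δ i < δ j) ∧
      (∀ i, i < k → ∀ γ : G, (0 < i → δ (i - 1) ≤ γ) → (i < k - 1 → γ ≤ δ i) →
        ∀ j ∈ S, B (c i) + c i • γ ≤ B j + j • γ) ∧
      (∀ i, i < k - 1 → ∀ γ : G, γ ≤ δ i → ∀ j ∈ S,
        (∀ j' ∈ S, B j + j • γ ≤ B j' + j' • γ) → c (i + 1) ≤ j) ∧
      (∀ i, i < k - 1 → ∀ γ : G, δ i ≤ γ → ∀ j ∈ S,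
        (∀ j' ∈ S, B j + j • γ ≤ B j' + j' • γ) → j ≤ c i) := by
  intro S
  induction S using Finset.strongInduction with
  | _ S ih =>
    intro hS
    set M := S.max' hS with hMdef
    have hMS : M ∈ S := S.max'_mem hS
    by_cases hS' : (S.erase M).Nonempty
    · -- inductive step
      obtain ⟨k', c', δ', hk', hmem', hcmono', hδmono', hseg', hP5', hP6'⟩ :=
        ih (S.erase M) (Finset.erase_ssubset hMS) hS'
      have hltM : ∀ i ∈ S.erase M, i < M := fun i hi =>
        lt_of_le_of_ne (S.le_max' i (Finset.mem_of_mem_erase hi)) (Finset.mem_erase.1 hi).1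
      have hcr : ∀ i ∈ S.erase M, ∃ ε : G, (M - i) • ε = B i - B M := fun i hi =>
        hdiv _ _ (by have := hltM i hi; omega)
      choose! cr hcross using hcr
      have hiffL : ∀ i ∈ S.erase M, ∀ γ : G,
          (B M + M • γ ≤ B i + i • γ) ↔ γ ≤ cr i := by
        intro i hi γ
        rw [seg_le' (hltM i hi).le (B i) (B M) γ, ← hcross i hi]
        exact (nsmul_right_strictMono (by have := hltM i hi; omega)).le_iff_le
      have hiffR : ∀ i ∈ S.erase M, ∀ γ : G,
          (B i + i • γ ≤ B M + M • γ) ↔ cr i ≤ γ := by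
        intro i hi γ
        rw [seg_le (hltM i hi).le (B i) (B M) γ, ← hcross i hi]
        exact (nsmul_right_strictMono (by have := hltM i hi; omega)).le_iff_le
      set δs := (S.erase M).inf' hS' cr with hδsdef
      obtain ⟨i0, hi0S, hi0⟩ := Finset.exists_mem_eq_inf' hS' cr
      have hδscr : ∀ i ∈ S.erase M, δs ≤ cr i := fun i hi => Finset.inf'_le cr hi
      have hBlow : ∀ γ : G, γ ≤ δs → ∀ j ∈ S.erase M, B M + M • γ ≤ B j + j • γ :=
        fun γ hγ j hj => (hiffL j hj γ).2 (hγ.trans (hδscr j hj))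
      have hFup : ∀ γ : G, δs ≤ γ → B i0 + i0 • γ ≤ B M + M • γ :=
        fun γ hγ => (hiffR i0 hi0S γ).2 (hi0 ▸ hγ)
      -- the index jstar
      have hjprops : ∃ jstar : ℕ, jstar ≤ k' - 1 ∧ (jstar < k' - 1 → δs < δ' jstar) ∧
          (∀ i, i < jstar → δ' i ≤ δs) := by
        by_cases h : ∃ i, i < k' - 1 ∧ δs < δ' i
        · obtain ⟨h1, h2⟩ := Nat.find_spec h
          refine ⟨Nat.find h, by omega, fun _ => h2, fun i hi => ?_⟩
          have h3 := Nat.find_min h hi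
          push_neg at h3
          exact h3 (by omega)
        · push_neg at h
          exact ⟨k' - 1, le_refl _, fun hc => absurd hc (lt_irrefl _),
            fun i hi => h i (by omega)⟩
      obtain ⟨jstar, hjle, hjlt, hjmin⟩ := hjprops
      have hδsmono : ∀ i, jstar ≤ i → i < k' - 1 → δs < δ' i := by
        intro i h1 h2
        rcases eq_or_lt_of_le h1 with rfl | h
        · exact hjlt h2
        · exact (hjlt (by omega)).trans (hδmono' jstar i h h2)
      have hjk' : jstar < k' := by omega
      have hsegjs := hseg' jstar hjk'
      have hcjs : c' jstar ∈ S.erase M := hmem' jstar hjk'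
      have hlow : ∀ j ∈ S.erase M,
          (∀ j' ∈ S.erase M, B j + j • δs ≤ B j' + j' • δs) → c' jstar ≤ j := by
        intro j hj hmin
        by_contra hcon
        push_neg at hcon
        rcases lt_or_ge jstar (k' - 1) with hcase | hcase
        · refine key hcon (hjlt hcase) (hmin (c' jstar) hcjs)
            (hsegjs (δ' jstar) ?_ (fun _ => le_rfl) j hj)
          intro h0
          exact (hjmin (jstar - 1) (by omega)).trans (hjlt hcase).le
        · refine key hcon (lt_add_of_pos_right δs he) (hmin (c' jstar) hcjs)
            (hsegjs (δs + e) ?_ (fun hlt => absurd hlt (by omega)) j hj)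
          intro h0
          exact (hjmin (jstar - 1) (by omega)).trans (le_add_of_nonneg_right he.le)
      refine ⟨k' - jstar + 1,
        fun i => match i with | 0 => M | (i' + 1) => c' (jstar + i'),
        fun i => match i with | 0 => δs | (i' + 1) => δ' (jstar + i'),
        by omega, ?_, ?_, ?_, ?_, ?_, ?_⟩
      · -- membership
        intro i hi
        rcases i with _ | i'
        · exact hMS
        · exact Finset.mem_of_mem_erase (hmem' (jstar + i') (by omega))
      · -- c strictly decreasing
        intro i j hij hjk
        rcases j with _ | j'
        · omega
        · rcases i with _ | i'
          · exact hltM _ (hmem' (jstar + j') (by omega))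
          · exact hcmono' (jstar + i') (jstar + j') (by omega) (by omega)
      · -- δ strictly increasing
        intro i j hij hjk
        rcases j with _ | j'
        · omega
        · rcases i with _ | i'
          · exact hδsmono (jstar + j') (by omega) (by omega)
          · exact hδmono' (jstar + i') (jstar + j') (by omega) (by omega)
      · -- segments
        intro i hi γ h1 h2 j hjS
        rcases i with _ | i'
        · have hγ : γ ≤ δs := h2 (by omega)
          by_cases hjM : j = M
          · subst hjM; exact le_rfl
          · exact hBlow γ hγ j (Finset.mem_erase.2 ⟨hjM, hjS⟩)
        · have hm : jstar + i' < k' := by omega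
          have hδsγ : δs ≤ γ := by
            rcases i' with _ | i''
            · exact h1 (by omega)
            · exact (hδsmono (jstar + i'') (by omega) (by omega)).le.trans (h1 (by omega))
          have hleft' : 0 < jstar + i' → δ' (jstar + i' - 1) ≤ γ := by
            intro h0
            rcases i' with _ | i''
            · exact (hjmin (jstar - 1) (by omega)).trans hδsγ
            · have h3 := h1 (by omega)
              have h4 : jstar + (i'' + 1) - 1 = jstar + i'' := by omega
              rw [h4]
              exact h3
          have hright' : jstar + i' < k' - 1 → γ ≤ δ' (jstar + i') :=
            fun hlt => h2 (by omega)
          have hminS' := hseg' (jstar + i') hm γ hleft' hright'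
          by_cases hjM : j = M
          · subst hjM
            exact (hminS' i0 hi0S).trans (hFup γ hδsγ)
          · exact hminS' j (Finset.mem_erase.2 ⟨hjM, hjS⟩)
      · -- P5
        intro i hik γ hγ j hjS hmin
        by_cases hjM : j = M
        · subst hjM
          rcases i with _ | i'
          · exact (hltM _ hcjs).le
          · exact (hltM _ (hmem' (jstar + i' + 1) (by omega))).le
        · have hj : j ∈ S.erase M := Finset.mem_erase.2 ⟨hjM, hjS⟩
          have hmin' : ∀ j' ∈ S.erase M, B j + j • γ ≤ B j' + j' • γ :=
            fun j' hj' => hmin j' (Finset.mem_of_mem_erase hj')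
          rcases i with _ | i'
          · -- γ ≤ δs, so γ = δs
            have hge : δs ≤ γ := (hδscr j hj).trans ((hiffR j hj γ).1 (hmin M hMS))
            have hγeq : γ = δs := le_antisymm hγ hge
            subst hγeq
            exact hlow j hj hmin'
          · exact hP5' (jstar + i') (by omega) γ hγ j hj hmin'
      · -- P6
        intro i hik γ hγ j hjS hmin
        rcases i with _ | i'
        · exact S.le_max' j hjS
        · by_cases hjM : j = M
          · subst hjM
            have hlt : δs < γ := (hδsmono (jstar + i') (by omega) (by omega)).trans_le hγ
            have := (hiffL i0 hi0S γ).1 (hmin i0 (Finset.mem_of_mem_erase hi0S))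
            rw [← hi0] at this
            exact absurd this (not_le.2 hlt)
          · exact hP6' (jstar + i') (by omega) γ hγ j
              (Finset.mem_erase.2 ⟨hjM, hjS⟩)
              (fun j' hj' => hmin j' (Finset.mem_of_mem_erase hj'))
    · -- base case : S = {M}
      have hall : ∀ j ∈ S, j = M := by
        intro j hj
        by_contra hne
        exact hS' ⟨j, Finset.mem_erase.2 ⟨hne, hj⟩⟩
      refine ⟨1, fun _ => M, fun _ => 0, le_refl 1, fun i _ => hMS, ?_, ?_, ?_, ?_, ?_⟩
      · intro i j hij hjk; omega
      · intro i j hij hjk; exact absurd hjk (by omega)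
      · intro i hi γ _ _ j hj
        rw [hall j hj]
      · intro i hik; exact absurd hik (by omega)
      · intro i hik; exact absurd hik (by omega)

end Envelope

/-- For every nonzero `f ∈ K[x]` there are `k ≥ 1`, naturals
`c₁ > ⋯ > c_k`, elements `β₁, …, β_k ∈ Γ` and breakpoints `δ₁ < ⋯ < δ_{k-1}` in the divisible
hull `ℚΓ` such that `minval_f(γ) = cᵢγ + βᵢ` on the `i`-th segment (indices `0,…,k-1` here).
Moreover, if `v(t) = δᵢ`, then the degrees `j` of the monomials appearing in `loc_{f,t}`
(equivalently, the indices with `v(a_j) + jδᵢ = minval_f(δᵢ)`) all lie between `c_{i+1}` and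
`c_i`, and both `c_{i+1}` and `c_i` occur among them. -/
theorem statement3 (K : Type*) [Field K] (Γ : Type*) [AddCommGroup Γ] [LinearOrder Γ] [IsOrderedAddMonoid Γ]
    (Γ' : Type*) [AddCommGroup Γ'] [LinearOrder Γ'] [IsOrderedAddMonoid Γ'] (w : AddVal K Γ)
    (ι : Γ →+ Γ') (hι : StrictMono ι)
    (hhull : ∀ δ : Γ', ∃ (n : ℕ) (γ : Γ), 0 < n ∧ n • δ = ι γ)
    (hdiv : ∀ (δ : Γ') (n : ℕ), 0 < n → ∃ ε : Γ', n • ε = δ)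
    (f : Polynomial K) (hf : f ≠ 0) :
    ∃ (k : ℕ) (c : ℕ → ℕ) (β : ℕ → Γ) (δ : ℕ → Γ'),
      1 ≤ k ∧
      (∀ i j, i < j → j < k → c j < c i) ∧
      (∀ i j, i < j → j < k - 1 → δ i < δ j) ∧
      (∀ i, i < k → ∀ γ : Γ',
        (0 < i → δ (i - 1) ≤ γ) → (i < k - 1 → γ ≤ δ i) →
        minvalQ w ι f γ = ((c i • γ + ι (β i) : Γ') : WithTop Γ')) ∧
      (∀ i, i < k - 1 → ∀ t : K, (w.v t).map ι = (δ i : WithTop Γ') →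
        (∀ j, j ≤ f.natDegree →
            (w.v (f.coeff j)).map ι + ((j • δ i : Γ') : WithTop Γ') = minvalQ w ι f (δ i) →
            c (i + 1) ≤ j ∧ j ≤ c i) ∧
        (c (i + 1) ≤ f.natDegree ∧
          (w.v (f.coeff (c (i + 1)))).map ι + ((c (i + 1) • δ i : Γ') : WithTop Γ')
            = minvalQ w ι f (δ i)) ∧
        (c i ≤ f.natDegree ∧
          (w.v (f.coeff (c i))).map ι + ((c i • δ i : Γ') : WithTop Γ')
            = minvalQ w ι f (δ i))) := by
  classical
  have hn : f.coeff f.natDegree ≠ 0 := Polynomial.leadingCoeff_ne_zero.2 hf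
  set S : Finset ℕ := (Finset.range (f.natDegree + 1)).filter (fun i => f.coeff i ≠ 0)
    with hSdef
  have hSn : f.natDegree ∈ S :=
    Finset.mem_filter.2 ⟨Finset.mem_range.2 (by omega), hn⟩
  have hS : S.Nonempty := ⟨_, hSn⟩
  have hSsub : ∀ i ∈ S, i ≤ f.natDegree := by
    intro i hi
    have := (Finset.mem_filter.1 hi).1
    rw [Finset.mem_range] at this
    omega
  have hbex : ∀ i ∈ S, ∃ g : Γ, w.v (f.coeff i) = ↑g := by
    intro i hi
    have hne : w.v (f.coeff i) ≠ ⊤ := fun h => (Finset.mem_filter.1 hi).2 ((w.v_eq_top_iff _).1 h)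
    obtain ⟨g, hg⟩ := WithTop.ne_top_iff_exists.1 hne
    exact ⟨g, hg.symm⟩
  choose! b hb using hbex
  have hterm : ∀ γ : Γ', ∀ i ∈ S,
      (w.v (f.coeff i)).map ι + ((i • γ : Γ') : WithTop Γ') = ((ι (b i) + i • γ : Γ') : WithTop Γ') := by
    intro γ i hi
    rw [hb i hi, WithTop.map_coe, ← WithTop.coe_add]
  have htop : ∀ γ : Γ', ∀ i, i ∉ S → i ≤ f.natDegree →
      (w.v (f.coeff i)).map ι + ((i • γ : Γ') : WithTop Γ') = ⊤ := by
    intro γ i hiS hin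
    have hz : f.coeff i = 0 := by
      by_contra h
      exact hiS (Finset.mem_filter.2 ⟨Finset.mem_range.2 (by omega), h⟩)
    rw [hz, (w.v_eq_top_iff 0).2 rfl]
    simp
  have hbridge : ∀ γ : Γ', ∀ j ∈ S,
      (∀ j' ∈ S, ι (b j) + j • γ ≤ ι (b j') + j' • γ) →
      minvalQ w ι f γ = ((ι (b j) + j • γ : Γ') : WithTop Γ') := by
    intro γ j hj hmin
    simp only [minvalQ]
    apply le_antisymm
    · refine le_trans (Finset.inf_le (Finset.mem_filter.1 hj).1) ?_
      rw [hterm γ j hj]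
    · apply Finset.le_inf
      intro i hir
      by_cases hiS : i ∈ S
      · rw [hterm γ i hiS]
        exact_mod_cast hmin i hiS
      · rw [htop γ i hiS (by rw [Finset.mem_range] at hir; omega)]
        exact le_top
  by_cases htriv : ∃ e : Γ', 0 < e
  · obtain ⟨e, he⟩ := htriv
    obtain ⟨k, c, δ, hk, hmem, hcmono, hδmono, hseg, hP5, hP6⟩ :=
      envelope e he hdiv (fun i => ι (b i)) S hS
    refine ⟨k, c, fun i => b (c i), δ, hk, hcmono, hδmono, ?_, ?_⟩
    · intro i hi γ h1 h2
      rw [hbridge γ (c i) (hmem i hi) (hseg i hi γ h1 h2)]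
      exact congrArg _ (add_comm _ _)
    · intro i hik t ht
      have hik1 : i < k := by omega
      have hi1k : i + 1 < k := by omega
      have hmin_ci : ∀ j ∈ S, ι (b (c i)) + c i • δ i ≤ ι (b j) + j • δ i :=
        hseg i hik1 (δ i) (fun h0 => (hδmono (i - 1) i (by omega) hik).le)
          (fun _ => le_rfl)
      have hmin_ci1 : ∀ j ∈ S, ι (b (c (i + 1))) + c (i + 1) • δ i ≤ ι (b j) + j • δ i :=
        hseg (i + 1) hi1k (δ i) (fun _ => le_rfl)
          (fun h => (hδmono i (i + 1) (by omega) h).le)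
      have hval : minvalQ w ι f (δ i) = ((ι (b (c i)) + c i • δ i : Γ') : WithTop Γ') :=
        hbridge (δ i) (c i) (hmem i hik1) hmin_ci
      refine ⟨?_, ⟨?_, ?_⟩, ⟨?_, ?_⟩⟩
      · intro j hj hjeq
        have hjS : j ∈ S := by
          by_contra hjS
          rw [htop (δ i) j hjS hj, hval] at hjeq
          exact WithTop.top_ne_coe hjeq
        rw [hterm (δ i) j hjS, hval] at hjeq
        have hjv : ι (b j) + j • δ i = ι (b (c i)) + c i • δ i := by exact_mod_cast hjeq
        have hminj : ∀ j' ∈ S, ι (b j) + j • δ i ≤ ι (b j') + j' • δ i :=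
          fun j' hj' => le_trans (le_of_eq hjv) (hmin_ci j' hj')
        exact ⟨hP5 i hik (δ i) le_rfl j hjS hminj, hP6 i hik (δ i) le_rfl j hjS hminj⟩
      · exact hSsub _ (hmem (i + 1) hi1k)
      · rw [hterm (δ i) (c (i + 1)) (hmem _ hi1k), hval]
        exact congrArg _ (le_antisymm (hmin_ci1 (c i) (hmem i hik1))
          (hmin_ci (c (i + 1)) (hmem _ hi1k)))
      · exact hSsub _ (hmem i hik1)
      · rw [hterm (δ i) (c i) (hmem i hik1), hval]
  · push_neg at htriv
    have hzero : ∀ x : Γ', x = 0 := fun x =>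
      le_antisymm (htriv x) (neg_nonpos.1 (htriv (-x)))
    refine ⟨1, fun _ => f.natDegree, fun _ => b f.natDegree, fun _ => (0 : Γ'),
      le_refl 1, ?_, ?_, ?_, ?_⟩
    · intro i j hij hjk; omega
    · intro i j hij hjk; exact absurd hjk (by omega)
    · intro i hi γ _ _
      rw [hbridge γ f.natDegree hSn
        (fun j' hj' => le_of_eq ((hzero _).trans (hzero _).symm))]
      exact congrArg _ (add_comm _ _)
    · intro i hik; exact absurd hik (by omega)
end

section
/- Let V be a valuation domain with field of fractions K, maximal ideal 𝔪, and associated valuation v. Let f ∈ K[x] be nonzero and t ∈ K. Then: (1) for every u ∈ V with v(u) = 0, one has v(f(tu)) > minval_f(v(t)) if loc_{f,t}(u mod 𝔪) = 0, and v(f(tu)) = minval_f(v(t)) if loc_{f,t}(u mod 𝔪) ≠ 0; (2) consequently, there exists s ∈ K with v(s) = v(t) and v(f(s)) > minval_f(v(t)) if and only if the local polynomial loc_{f,t}(x) has a nonzero root in V/𝔪. -/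
open Polynomial

variable {K : Type*} [Field K] {Γ : Type*} [AddCommGroup Γ] [LinearOrder Γ] [IsOrderedAddMonoid Γ]

/-- Let `f ∈ K[x]` be nonzero and `t ∈ K` (with `v(t) = γ₀ ∈ Γ`), and let
`loc_{f,t} ∈ (V/𝔪)[x]` be the local polynomial of `f` at `t` (the reduction mod `𝔪` of
`g := f(tx)/(a_d t^d)`, `d` the largest index attaining `minval_f(v(t))`).  Then:
(1) for every `u ∈ V` with `v(u) = 0`, `v(f(tu)) > minval_f(v(t))` if `loc_{f,t}(u mod 𝔪) = 0`,
and `v(f(tu)) = minval_f(v(t))` if `loc_{f,t}(u mod 𝔪) ≠ 0`;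
(2) there exists `s ∈ K` with `v(s) = v(t)` and `v(f(s)) > minval_f(v(t))` if and only if
`loc_{f,t}` has a nonzero root in `V/𝔪`. -/
theorem statement5 (K : Type*) [Field K] (Γ : Type*) [AddCommGroup Γ] [LinearOrder Γ] [IsOrderedAddMonoid Γ]
    (w : AddVal K Γ)
    (V : Subring K) (hV : ∀ x : K, x ∈ V ↔ 0 ≤ w.v x)
    (m : Ideal ↥V) (hm : ∀ x : ↥V, x ∈ m ↔ 0 < w.v (x : K))
    (f : Polynomial K) (hf : f ≠ 0) (t : K) (γ₀ : Γ) (hvt : w.v t = (γ₀ : WithTop Γ))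
    (d : ℕ) (hd_le : d ≤ f.natDegree)
    (hd_eq : w.v (f.coeff d) + ((d • γ₀ : Γ) : WithTop Γ) = minval w f γ₀)
    (hd_max : ∀ i, i ≤ f.natDegree →
      w.v (f.coeff i) + ((i • γ₀ : Γ) : WithTop Γ) = minval w f γ₀ → i ≤ d)
    (g : Polynomial K) (hg : g = C (f.coeff d * t ^ d)⁻¹ * f.comp (C t * X))
    (hmem : ∀ i : ℕ, g.coeff i ∈ V)
    (h : Polynomial (↥V ⧸ m))
    (hh : ∀ i : ℕ, h.coeff i = Ideal.Quotient.mk m ⟨g.coeff i, hmem i⟩) :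
    (∀ u : ↥V, w.v (u : K) = ((0 : Γ) : WithTop Γ) →
      (Polynomial.eval (Ideal.Quotient.mk m u) h = 0 →
        minval w f γ₀ < w.v (f.eval (t * (u : K)))) ∧
      (Polynomial.eval (Ideal.Quotient.mk m u) h ≠ 0 →
        w.v (f.eval (t * (u : K))) = minval w f γ₀)) ∧
    ((∃ s : K, w.v s = w.v t ∧ minval w f γ₀ < w.v (f.eval s)) ↔
      ∃ ξ : ↥V ⧸ m, ξ ≠ 0 ∧ h.IsRoot ξ) := by

  classical
  -- basic valuation facts
  have v0 : w.v 0 = ⊤ := (w.v_eq_top_iff 0).mpr rfl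
  have ht0 : t ≠ 0 := by
    intro h0
    rw [h0, v0] at hvt
    exact (WithTop.coe_ne_top (a := γ₀)) hvt.symm
  have hpow : ∀ n : ℕ, w.v (t ^ n) = ((n • γ₀ : Γ) : WithTop Γ) := by
    intro n
    induction n with
    | zero => simpa using w.v_one
    | succ n ih =>
        rw [pow_succ, w.v_mul, ih, hvt, succ_nsmul, WithTop.coe_add]
  -- minval is not ⊤
  have hlead : f.coeff f.natDegree ≠ 0 := by
    exact fun h0 => hf (Polynomial.leadingCoeff_eq_zero.mp h0)
  have hminval_ne_top : minval w f γ₀ ≠ ⊤ := by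
    intro htop
    have hmem' : f.natDegree ∈ Finset.range (f.natDegree + 1) := by
      simp
    have hle : minval w f γ₀ ≤
        w.v (f.coeff f.natDegree) + ((f.natDegree • γ₀ : Γ) : WithTop Γ) :=
      Finset.inf_le hmem'
    rw [htop, top_le_iff, WithTop.add_eq_top] at hle
    rcases hle with h1 | h1
    · exact hlead ((w.v_eq_top_iff _).mp h1)
    · exact (WithTop.coe_ne_top) h1
  have had : f.coeff d ≠ 0 := by
    intro h0
    apply hminval_ne_top
    rw [← hd_eq, h0, v0, top_add]
  have hatd : f.coeff d * t ^ d ≠ 0 := mul_ne_zero had (pow_ne_zero _ ht0)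
  have hvatd : w.v (f.coeff d * t ^ d) = minval w f γ₀ := by
    rw [w.v_mul, hpow, hd_eq]
  -- the lifted polynomial G over V
  set G : Polynomial ↥V :=
    ∑ i ∈ Finset.range (g.natDegree + 1), Polynomial.C (⟨g.coeff i, hmem i⟩ : ↥V) * X ^ i
    with hGdef
  have hGc : ∀ i, G.coeff i = (⟨g.coeff i, hmem i⟩ : ↥V) := by
    intro i
    rw [hGdef, Polynomial.finset_sum_coeff]
    simp only [Polynomial.coeff_C_mul, Polynomial.coeff_X_pow, mul_ite, mul_one, mul_zero]
    rw [Finset.sum_ite_eq (Finset.range (g.natDegree + 1)) i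
      (fun j => (⟨g.coeff j, hmem j⟩ : ↥V))]
    by_cases hi : i ∈ Finset.range (g.natDegree + 1)
    · simp [hi]
    · simp only [hi, if_false]
      have : g.coeff i = 0 := by
        apply Polynomial.coeff_eq_zero_of_natDegree_lt
        simpa using (by simpa using hi : ¬ i < g.natDegree + 1)
      exact Subtype.ext (by simpa using this.symm)
  have hgmap : g = G.map V.subtype := by
    ext i
    rw [Polynomial.coeff_map, hGc]
    rfl
  have hhmap : h = G.map (Ideal.Quotient.mk m) := by
    ext i
    rw [Polynomial.coeff_map, hGc, hh]
  have hgeval : ∀ u : ↥V, g.eval (u : K) = ((G.eval u : ↥V) : K) := by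
    intro u
    rw [hgmap]
    show (G.map V.subtype).eval (V.subtype u) = V.subtype (G.eval u)
    rw [Polynomial.eval_map, Polynomial.eval₂_at_apply]
  have hheval : ∀ u : ↥V,
      h.eval (Ideal.Quotient.mk m u) = Ideal.Quotient.mk m (G.eval u) := by
    intro u
    rw [hhmap, Polynomial.eval_map, Polynomial.eval₂_at_apply]
  -- central identity
  have central : ∀ u : ↥V,
      w.v (f.eval (t * (u : K))) = minval w f γ₀ + w.v ((G.eval u : ↥V) : K) := by
    intro u
    have hge : g.eval (u : K) = (f.coeff d * t ^ d)⁻¹ * f.eval (t * (u : K)) := by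
      rw [hg]
      simp [Polynomial.eval_comp]
    have hfg : f.eval (t * (u : K)) = (f.coeff d * t ^ d) * g.eval (u : K) := by
      rw [hge]
      field_simp
    rw [hfg, w.v_mul, hvatd, hgeval]
  have hvge_nonneg : ∀ u : ↥V, 0 ≤ w.v ((G.eval u : ↥V) : K) := by
    intro u
    exact (hV _).mp (G.eval u).2
  have hroot_iff : ∀ u : ↥V,
      h.eval (Ideal.Quotient.mk m u) = 0 ↔ 0 < w.v ((G.eval u : ↥V) : K) := by
    intro u
    rw [hheval, Ideal.Quotient.eq_zero_iff_mem, hm]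
  have hlt_iff : ∀ u : ↥V,
      minval w f γ₀ < w.v (f.eval (t * (u : K))) ↔ 0 < w.v ((G.eval u : ↥V) : K) := by
    intro u
    rw [central u]
    constructor
    · intro hlt
      by_contra hle
      push_neg at hle
      have h0 : w.v ((G.eval u : ↥V) : K) = 0 := le_antisymm hle (hvge_nonneg u)
      rw [h0, add_zero] at hlt
      exact lt_irrefl _ hlt
    · intro hpos
      calc minval w f γ₀ = minval w f γ₀ + 0 := (add_zero _).symm
        _ < minval w f γ₀ + w.v ((G.eval u : ↥V) : K) := by
            exact WithTop.add_lt_add_left hminval_ne_top hpos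
  constructor
  · intro u _
    constructor
    · intro hz
      exact (hlt_iff u).mpr ((hroot_iff u).mp hz)
    · intro hnz
      have hnpos : ¬ 0 < w.v ((G.eval u : ↥V) : K) := fun hp => hnz ((hroot_iff u).mpr hp)
      have h0 : w.v ((G.eval u : ↥V) : K) = 0 :=
        le_antisymm (not_lt.mp hnpos) (hvge_nonneg u)
      rw [central u, h0, add_zero]
  · constructor
    · rintro ⟨s, hvs, hlt⟩
      have hu : w.v (s / t) = ((0 : Γ) : WithTop Γ) := by
        have hsu : s = t * (s / t) := by field_simp
        have h1 : w.v t + w.v (s / t) = w.v t + ((0 : Γ) : WithTop Γ) := by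
          rw [← w.v_mul, ← hsu, hvs]
          simp
        exact WithTop.add_left_cancel (hvt ▸ WithTop.coe_ne_top) h1
      have huV : s / t ∈ V := (hV _).mpr (by rw [hu]; exact le_refl _)
      refine ⟨Ideal.Quotient.mk m ⟨s / t, huV⟩, ?_, ?_⟩
      · intro hz
        rw [Ideal.Quotient.eq_zero_iff_mem, hm] at hz
        simp only at hz
        rw [hu] at hz
        exact lt_irrefl _ (by exact_mod_cast hz)
      · show h.eval _ = 0
        rw [hroot_iff]
        rw [← hlt_iff]
        have : t * ((⟨s / t, huV⟩ : ↥V) : K) = s := by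
          show t * (s / t) = s
          field_simp
        rw [this]
        exact hlt
    · rintro ⟨ξ, hξne, hξ⟩
      obtain ⟨u, rfl⟩ := Ideal.Quotient.mk_surjective ξ
      have huv : w.v (u : K) = 0 := by
        have h1 : 0 ≤ w.v (u : K) := (hV _).mp u.2
        have h2 : ¬ 0 < w.v (u : K) := by
          intro hp
          exact hξne ((Ideal.Quotient.eq_zero_iff_mem).mpr ((hm u).mpr hp))
        exact le_antisymm (not_lt.mp h2) h1
      refine ⟨t * (u : K), ?_, ?_⟩
      · rw [w.v_mul, huv, add_zero]
      · exact (hlt_iff u).mpr ((hroot_iff u).mp hξ)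
end

section
/- Let V be a valuation domain with field of fractions K, maximal ideal 𝔪, associated valuation v, and value group Γ, and suppose the residue field V/𝔪 is infinite. If f_1, …, f_m ∈ K[x] are finitely many nonzero polynomials, then for every γ ∈ Γ there exists a ∈ K with v(a) = γ such that v(f_i(a)) = minval_{f_i}(γ) for each i = 1, …, m. -/
open Polynomial

variable {K : Type*} [Field K] {Γ : Type*} [AddCommGroup Γ] [LinearOrder Γ] [IsOrderedAddMonoid Γ]

lemma AddVal.v_zero (w : AddVal K Γ) : w.v 0 = ⊤ := (w.v_eq_top_iff 0).2 rfl

lemma AddVal.v_pow_coe (w : AddVal K Γ) (c : K) (d : Γ) (h : w.v c = (d : WithTop Γ)) (n : ℕ) :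
    w.v (c ^ n) = ((n • d : Γ) : WithTop Γ) := by
  induction n with
  | zero => simpa using w.v_one
  | succ n ih =>
    rw [pow_succ, w.v_mul, ih, h, succ_nsmul, WithTop.coe_add]

lemma AddVal.v_inv (w : AddVal K Γ) (b : K) (d : Γ) (h : w.v b = (d : WithTop Γ)) :
    w.v b⁻¹ = ((-d : Γ) : WithTop Γ) := by
  have hb : b ≠ 0 := by
    intro h0; rw [h0, w.v_zero] at h; exact (WithTop.coe_ne_top h.symm)
  have hsum : w.v b + w.v b⁻¹ = 0 := by
    rw [← w.v_mul, mul_inv_cancel₀ hb, w.v_one]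
  have hne : w.v b⁻¹ ≠ ⊤ := by
    rw [Ne, w.v_eq_top_iff]; exact inv_ne_zero hb
  obtain ⟨e, he⟩ := WithTop.ne_top_iff_exists.1 hne
  rw [h, ← he, ← WithTop.coe_add] at hsum
  have : d + e = 0 := by exact_mod_cast hsum
  rw [← he, WithTop.coe_eq_coe]
  exact eq_neg_of_add_eq_zero_right this

/-- Suppose the residue field `V/𝔪` is infinite.  Given finitely many nonzero
polynomials `f₁, …, f_m ∈ K[x]` and `γ ∈ Γ`, there exists `a ∈ K` with `v(a) = γ` and
`v(fᵢ(a)) = minval_{fᵢ}(γ)` for each `i`. -/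
theorem statement6 (K : Type*) [Field K] (Γ : Type*) [AddCommGroup Γ] [LinearOrder Γ] [IsOrderedAddMonoid Γ]
    (w : AddVal K Γ)
    (V : Subring K) (hV : ∀ x : K, x ∈ V ↔ 0 ≤ w.v x)
    (m : Ideal ↥V) (hm : ∀ x : ↥V, x ∈ m ↔ 0 < w.v (x : K))
    (hinf : Infinite (↥V ⧸ m))
    (mm : ℕ) (f : Fin mm → Polynomial K) (hf : ∀ i, f i ≠ 0) (γ : Γ) :
    ∃ a : K, w.v a = (γ : WithTop Γ) ∧ ∀ i, w.v ((f i).eval a) = minval w (f i) γ := by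
  classical
  -- m is prime
  have h1m : (1 : ↥V) ∉ m := by
    intro h
    have := (hm 1).1 h
    rw [OneMemClass.coe_one, w.v_one] at this
    exact lt_irrefl _ this
  have hprime : m.IsPrime := by
    constructor
    · exact (Ideal.ne_top_iff_one m).2 h1m
    · intro x y hxy
      by_contra hcon
      push_neg at hcon
      obtain ⟨hx, hy⟩ := hcon
      have hx' : w.v (x : K) ≤ 0 := not_lt.1 (fun h => hx ((hm x).2 h))
      have hy' : w.v (y : K) ≤ 0 := not_lt.1 (fun h => hy ((hm y).2 h))
      have hxy' := (hm _).1 hxy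
      rw [MulMemClass.coe_mul, w.v_mul] at hxy'
      have h2 : w.v (x : K) + w.v (y : K) ≤ 0 := by
        calc w.v (x : K) + w.v (y : K) ≤ 0 + 0 := add_le_add hx' hy'
        _ = 0 := add_zero 0
      exact absurd hxy' (not_lt.2 h2)
  haveI := hprime
  haveI : IsDomain (↥V ⧸ m) := Ideal.Quotient.isDomain m
  haveI := hinf
  obtain ⟨c, hc⟩ := w.v_surj γ
  -- minval is finite and attained
  have hd : ∀ i : Fin mm, ∃ d : Γ, minval w (f i) γ = (d : WithTop Γ) := by
    intro i
    have hne : minval w (f i) γ ≠ ⊤ := by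
      have hmem : (f i).natDegree ∈ Finset.range ((f i).natDegree + 1) := by
        simp
      have hle : minval w (f i) γ ≤
          w.v ((f i).coeff (f i).natDegree) + (((f i).natDegree • γ : Γ) : WithTop Γ) :=
        Finset.inf_le hmem
      have hct : w.v ((f i).coeff (f i).natDegree) ≠ ⊤ := by
        rw [Ne, w.v_eq_top_iff]
        exact mt leadingCoeff_eq_zero.1 (hf i)
      intro htop
      rw [htop, top_le_iff, WithTop.add_eq_top] at hle
      rcases hle with h | h
      · exact hct h
      · exact WithTop.coe_ne_top h
    obtain ⟨d, hd⟩ := WithTop.ne_top_iff_exists.1 hne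
    exact ⟨d, hd.symm⟩
  choose d hmd using hd
  have hmd' : ∀ i, (Finset.range ((f i).natDegree + 1)).inf
      (fun j => w.v ((f i).coeff j) + ((j • γ : Γ) : WithTop Γ)) = ((d i : Γ) : WithTop Γ) := hmd
  choose b hb using fun i => w.v_surj (d i)
  have hbne : ∀ i, b i ≠ 0 := by
    intro i h0
    have h1 := hb i
    rw [h0, w.v_zero] at h1
    exact WithTop.coe_ne_top h1.symm
  set g : Fin mm → Polynomial K := fun i =>
    ∑ j ∈ Finset.range ((f i).natDegree + 1), monomial j ((f i).coeff j * c ^ j * (b i)⁻¹)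
    with hg
  have hgcoeff : ∀ i k, (g i).coeff k =
      if k ∈ Finset.range ((f i).natDegree + 1) then (f i).coeff k * c ^ k * (b i)⁻¹ else 0 := by
    intro i k
    rw [hg]
    simp only [finset_sum_coeff, coeff_monomial]
    rw [Finset.sum_ite_eq']
  have hvg : ∀ i k, k ∈ Finset.range ((f i).natDegree + 1) →
      w.v ((g i).coeff k) =
        w.v ((f i).coeff k) + ((k • γ : Γ) : WithTop Γ) + ((-(d i) : Γ) : WithTop Γ) := by
    intro i k hk
    rw [hgcoeff, if_pos hk, w.v_mul, w.v_mul, w.v_pow_coe c γ hc, w.v_inv (b i) (d i) (hb i)]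
  have hgV : ∀ i k, 0 ≤ w.v ((g i).coeff k) := by
    intro i k
    by_cases hk : k ∈ Finset.range ((f i).natDegree + 1)
    · rw [hvg i k hk]
      have hle : ((d i : Γ) : WithTop Γ) ≤ w.v ((f i).coeff k) + ((k • γ : Γ) : WithTop Γ) := by
        rw [← hmd' i]
        exact Finset.inf_le hk
      calc (0 : WithTop Γ) = ((d i : Γ) : WithTop Γ) + ((-(d i) : Γ) : WithTop Γ) := by
            rw [← WithTop.coe_add]; simp
        _ ≤ _ := add_le_add_left hle _
    · rw [hgcoeff, if_neg hk, w.v_zero]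
      exact le_top
  have hunit : ∀ i, ∃ k ∈ Finset.range ((f i).natDegree + 1), w.v ((g i).coeff k) = 0 := by
    intro i
    obtain ⟨j0, hj0, hjeq⟩ := Finset.exists_mem_eq_inf (Finset.range ((f i).natDegree + 1))
      ⟨0, by simp⟩ (fun j => w.v ((f i).coeff j) + ((j • γ : Γ) : WithTop Γ))
    refine ⟨j0, hj0, ?_⟩
    rw [hvg i j0 hj0]
    have h1 : w.v ((f i).coeff j0) + ((j0 • γ : Γ) : WithTop Γ) = ((d i : Γ) : WithTop Γ) := by
      rw [← hjeq, hmd' i]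
    rw [h1, ← WithTop.coe_add]
    simp
  have hsub : ∀ i, (↑(g i).coeffs : Set K) ⊆ V := by
    intro i x hx
    obtain ⟨k, _, hk⟩ := Polynomial.mem_coeffs_iff.1 hx
    rw [hk]
    exact (hV _).2 (hgV i k)
  set G : ∀ i : Fin mm, Polynomial ↥V := fun i => (g i).toSubring V (hsub i) with hG
  have hGbar : ∀ i, (G i).map (Ideal.Quotient.mk m) ≠ 0 := by
    intro i h0
    obtain ⟨k, _, hk⟩ := hunit i
    have h1 : ((G i).map (Ideal.Quotient.mk m)).coeff k = 0 := by rw [h0, coeff_zero]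
    rw [coeff_map] at h1
    have h2 := (hm _).1 (Ideal.Quotient.eq_zero_iff_mem.1 h1)
    rw [hG] at h2
    rw [coeff_toSubring (g i) V (hsub i)] at h2
    rw [hk] at h2
    exact lt_irrefl _ h2
  have hBfin : ((⋃ i, {x : ↥V ⧸ m | ((G i).map (Ideal.Quotient.mk m)).IsRoot x}) ∪ {0}).Finite :=
    Set.Finite.union (Set.finite_iUnion fun i => Polynomial.finite_setOf_isRoot (hGbar i))
      (Set.finite_singleton 0)
  obtain ⟨r, hr⟩ := hBfin.infinite_compl.nonempty
  simp only [Set.mem_compl_iff, Set.mem_union, Set.mem_iUnion, Set.mem_singleton_iff,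
    not_or, not_exists, Set.mem_setOf_eq] at hr
  obtain ⟨hroot, hr0⟩ := hr
  obtain ⟨u, hu⟩ := Ideal.Quotient.mk_surjective r
  have hum : u ∉ m := fun h => hr0 (by rw [← hu]; exact Ideal.Quotient.eq_zero_iff_mem.2 h)
  have hu0 : w.v (u : K) = 0 :=
    le_antisymm (not_lt.1 (fun h => hum ((hm u).2 h))) ((hV _).1 u.2)
  have heval : ∀ i, w.v ((g i).eval (u : K)) = 0 := by
    intro i
    have hbar : ((G i).map (Ideal.Quotient.mk m)).eval r = Ideal.Quotient.mk m ((G i).eval u) := by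
      rw [← hu, eval_map, eval₂_at_apply]
    have hne : (G i).eval u ∉ m := by
      intro h
      exact hroot i (by rw [IsRoot, hbar]; exact Ideal.Quotient.eq_zero_iff_mem.2 h)
    have he2 : ((((G i).eval u : ↥V)) : K) = (g i).eval (u : K) := by
      have h3 := eval₂_at_apply (p := G i) (Subring.subtype V) u
      rw [← eval_map, hG, map_toSubring] at h3
      exact h3.symm
    rw [← he2]
    exact le_antisymm (not_lt.1 (fun h => hne ((hm _).2 h))) ((hV _).1 ((G i).eval u).2)
  refine ⟨c * u, ?_, ?_⟩
  · rw [w.v_mul, hc, hu0, add_zero]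
  · intro i
    have hfeval : (f i).eval (c * u) = b i * (g i).eval (u : K) := by
      rw [eval_eq_sum_range, hg]
      simp only [eval_finset_sum, eval_monomial]
      rw [Finset.mul_sum]
      refine Finset.sum_congr rfl fun j _ => ?_
      rw [mul_pow]
      field_simp [hbne i]
    rw [hfeval, w.v_mul, hb i, heval i, add_zero, hmd i]
end

section
/- Let V be a valuation domain with field of fractions K, valuation v, and value group Γ. For every nonzero rational function φ ∈ K(x), for all but finitely many γ ∈ Γ the following holds: for every t ∈ K with v(t) = γ, φ is defined at t and v(φ(t)) = minval_φ(v(t)). -/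
open Polynomial

variable {K : Type*} [Field K] {Γ : Type*} [AddCommGroup Γ] [LinearOrder Γ] [IsOrderedAddMonoid Γ]

/-- The minimum valuation function of a nonzero rational function `φ = f/g`:
`minval_φ = minval_f - minval_g` (independent of the representation `f/g`). -/
noncomputable def minvalRat (w : AddVal K Γ) (φ : RatFunc K) (γ : Γ) : Γ :=
  WithTop.untopD 0 (minval w φ.num γ) - WithTop.untopD 0 (minval w φ.denom γ)

lemma AddVal.v_neg (w : AddVal K Γ) (x : K) : w.v (-x) = w.v x := by
  have h1 : w.v (-1 : K) + w.v (-1 : K) = 0 := by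
    rw [← w.v_mul]; norm_num [w.v_one]
  have h2 : w.v (-1 : K) = 0 := by
    cases h : w.v (-1 : K) with
    | top => rw [h] at h1; simp at h1
    | coe a =>
      rw [h, ← WithTop.coe_add, ← WithTop.coe_zero, WithTop.coe_inj] at h1
      have : a = 0 := by
        rcases lt_trichotomy a 0 with h' | h' | h'
        · exact absurd h1 (ne_of_lt (by simpa using add_lt_add h' h'))
        · exact h'
        · exact absurd h1 (ne_of_gt (by simpa using add_lt_add h' h'))
      simp [this]
  have : w.v (-x) = w.v ((-1) * x) := by ring_nf
  rw [this, w.v_mul, h2, zero_add]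

lemma AddVal.v_add_eq (w : AddVal K Γ) (x y : K) (h : w.v x < w.v y) :
    w.v (x + y) = w.v x := by
  have le1 : w.v x ≤ w.v (x + y) := by
    have := w.v_min_le_add x y
    rwa [min_eq_left h.le] at this
  refine le_antisymm ?_ le1
  by_contra hlt
  push_neg at hlt
  have h2 := w.v_min_le_add (x + y) (-y)
  rw [w.v_neg] at h2
  have hx : w.v (x + y + -y) = w.v x := by ring_nf
  rw [hx] at h2
  exact absurd h2 (not_le.2 (lt_min hlt h))

lemma AddVal.v_sum_lt (w : AddVal K Γ) {ι : Type*} (s : Finset ι) (f : ι → K)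
    (c : WithTop Γ) (hc : c ≠ ⊤) (h : ∀ j ∈ s, c < w.v (f j)) :
    c < w.v (∑ j ∈ s, f j) := by
  induction s using Finset.cons_induction with
  | empty => simpa [w.v_zero] using lt_top_iff_ne_top.2 hc
  | cons a s ha ih =>
    rw [Finset.sum_cons]
    refine lt_of_lt_of_le (lt_min (h a (by simp)) (ih fun j hj => h j (by simp [hj])))
      (w.v_min_le_add _ _)

lemma AddVal.v_sum_eq (w : AddVal K Γ) {ι : Type*} [DecidableEq ι] (s : Finset ι) (f : ι → K)
    (i0 : ι) (hi0 : i0 ∈ s) (htop : w.v (f i0) ≠ ⊤)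
    (h : ∀ j ∈ s, j ≠ i0 → w.v (f i0) < w.v (f j)) :
    w.v (∑ j ∈ s, f j) = w.v (f i0) := by
  rw [← Finset.add_sum_erase s f hi0]
  exact w.v_add_eq _ _ (w.v_sum_lt _ _ _ htop fun j hj =>
    h j (Finset.mem_of_mem_erase hj) (Finset.ne_of_mem_erase hj))

lemma AddVal.v_pow (w : AddVal K Γ) (t : K) (γ : Γ) (ht : w.v t = (γ : WithTop Γ)) (n : ℕ) :
    w.v (t ^ n) = ((n • γ : Γ) : WithTop Γ) := by
  induction n with
  | zero => simpa using w.v_one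
  | succ n ih =>
    rw [pow_succ, w.v_mul, ih, ht, ← WithTop.coe_add, succ_nsmul]

/-- Exceptional set of a polynomial: values `γ` where two distinct terms have equal valuation. -/
def badSet (w : AddVal K Γ) (f : Polynomial K) : Set Γ :=
  {γ | ∃ i ∈ Finset.range (f.natDegree + 1), ∃ j ∈ Finset.range (f.natDegree + 1),
    i ≠ j ∧ f.coeff i ≠ 0 ∧ f.coeff j ≠ 0 ∧
    w.v (f.coeff i) + ((i • γ : Γ) : WithTop Γ) = w.v (f.coeff j) + ((j • γ : Γ) : WithTop Γ)}

lemma nsmul_inj_aux {δ : Γ} {m n : ℕ} (h : m < n) (e : m • δ = n • δ) : δ = 0 := by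
  by_contra hδ
  have h1 : (n - m) • δ + m • δ = m • δ := by
    rw [← add_nsmul, Nat.sub_add_cancel h.le, e]
  have hz : (n - m) • δ = 0 := add_eq_right.mp h1
  rcases (lt_or_gt_of_ne hδ) with h0 | h0
  · exact absurd hz (ne_of_lt (nsmul_neg h0 (Nat.sub_ne_zero_of_lt h)))
  · exact absurd hz (ne_of_gt (nsmul_pos h0 (Nat.sub_ne_zero_of_lt h)))

lemma badSet_finite (w : AddVal K Γ) (f : Polynomial K) : (badSet w f).Finite := by
  have hsub : badSet w f ⊆ ⋃ i ∈ Finset.range (f.natDegree + 1),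
      ⋃ j ∈ Finset.range (f.natDegree + 1),
      {γ : Γ | i ≠ j ∧ f.coeff i ≠ 0 ∧ f.coeff j ≠ 0 ∧
        w.v (f.coeff i) + ((i • γ : Γ) : WithTop Γ)
          = w.v (f.coeff j) + ((j • γ : Γ) : WithTop Γ)} := by
    rintro γ ⟨i, hi, j, hj, h⟩
    exact Set.mem_biUnion hi (Set.mem_biUnion hj h)
  refine Set.Finite.subset ?_ hsub
  refine Set.Finite.biUnion (Finset.range _).finite_toSet fun i _ =>
    Set.Finite.biUnion (Finset.range _).finite_toSet fun j _ => ?_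
  refine Set.Subsingleton.finite ?_
  rintro γ₁ ⟨hij, hfi, hfj, h1⟩ γ₂ ⟨-, -, -, h2⟩
  obtain ⟨α, hα⟩ := WithTop.ne_top_iff_exists.1 ((w.v_eq_top_iff _).not.2 hfi)
  obtain ⟨β, hβ⟩ := WithTop.ne_top_iff_exists.1 ((w.v_eq_top_iff _).not.2 hfj)
  rw [← hα, ← hβ, ← WithTop.coe_add, ← WithTop.coe_add, WithTop.coe_inj] at h1 h2
  -- α + i•γ = β + j•γ for γ = γ₁, γ₂
  have key : i • (γ₁ - γ₂) = j • (γ₁ - γ₂) := by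
    rw [smul_sub, smul_sub]
    have h3 : (α + i • γ₁) - (α + i • γ₂) = (β + j • γ₁) - (β + j • γ₂) := by
      rw [h1, h2]
    simpa [add_sub_add_left_eq_sub] using h3
  have : γ₁ - γ₂ = 0 := by
    rcases hij.lt_or_gt with hlt | hlt
    · exact nsmul_inj_aux hlt key
    · exact nsmul_inj_aux hlt key.symm
  exact sub_eq_zero.mp this

lemma minval_ne_top (w : AddVal K Γ) (f : Polynomial K) (hf : f ≠ 0) (γ : Γ) :
    minval w f γ ≠ ⊤ := by
  have hmem : f.natDegree ∈ Finset.range (f.natDegree + 1) := by simp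
  have hle : minval w f γ ≤ w.v (f.coeff f.natDegree) + ((f.natDegree • γ : Γ) : WithTop Γ) :=
    Finset.inf_le hmem
  have hc : f.coeff f.natDegree ≠ 0 := by
    simpa [Polynomial.coeff_natDegree] using Polynomial.leadingCoeff_ne_zero.2 hf
  obtain ⟨α, hα⟩ := WithTop.ne_top_iff_exists.1 ((w.v_eq_top_iff _).not.2 hc)
  intro h
  rw [h, ← hα, ← WithTop.coe_add] at hle
  exact WithTop.coe_ne_top (top_le_iff.1 hle)

lemma eval_v_eq (w : AddVal K Γ) (f : Polynomial K) (hf : f ≠ 0) (γ : Γ)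
    (hγ : γ ∉ badSet w f) (t : K) (ht : w.v t = (γ : WithTop Γ)) :
    w.v (f.eval t) = minval w f γ := by
  have hne : (Finset.range (f.natDegree + 1)).Nonempty := ⟨0, by simp⟩
  obtain ⟨i0, hi0, hinf⟩ := Finset.exists_mem_eq_inf (Finset.range (f.natDegree + 1)) hne
    (fun i => w.v (f.coeff i) + ((i • γ : Γ) : WithTop Γ))
  have hmin : minval w f γ = w.v (f.coeff i0) + ((i0 • γ : Γ) : WithTop Γ) := hinf
  have htop : minval w f γ ≠ ⊤ := minval_ne_top w f hf γ
  have hterm : ∀ i : ℕ, w.v (f.coeff i * t ^ i)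
      = w.v (f.coeff i) + ((i • γ : Γ) : WithTop Γ) := fun i => by
    rw [w.v_mul, w.v_pow t γ ht]
  have hci : f.coeff i0 ≠ 0 := by
    intro h0
    exact htop (by rw [hmin, (w.v_eq_top_iff _).2 h0, top_add])
  have hstrict : ∀ j ∈ Finset.range (f.natDegree + 1), j ≠ i0 →
      w.v (f.coeff i0 * t ^ i0) < w.v (f.coeff j * t ^ j) := by
    intro j hj hji
    rw [hterm, hterm]
    have hle : w.v (f.coeff i0) + ((i0 • γ : Γ) : WithTop Γ)
        ≤ w.v (f.coeff j) + ((j • γ : Γ) : WithTop Γ) := hmin ▸ Finset.inf_le hj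
    rcases hle.lt_or_eq with h | h
    · exact h
    · exfalso
      by_cases hcj : f.coeff j = 0
      · rw [(w.v_eq_top_iff _).2 hcj, top_add] at h
        exact htop (hmin.trans h)
      · exact hγ ⟨i0, hi0, j, hj, Ne.symm hji, hci, hcj, h⟩
  have hvi0 : w.v (f.coeff i0 * t ^ i0) ≠ ⊤ := by
    rw [hterm, ← hmin]; exact htop
  rw [Polynomial.eval_eq_sum_range, w.v_sum_eq _ _ i0 hi0 hvi0 hstrict, hterm, ← hmin]


/-- For every nonzero rational function `φ ∈ K(x)`, for all but finitely many
`γ ∈ Γ` the following holds: for every `t ∈ K` with `v(t) = γ`, `φ` is defined at `t` and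
`v(φ(t)) = minval_φ(v(t))`. -/
theorem statement9 (K : Type*) [Field K] (Γ : Type*) [AddCommGroup Γ] [LinearOrder Γ] [IsOrderedAddMonoid Γ]
    (w : AddVal K Γ) (φ : RatFunc K) (hφ : φ ≠ 0) :
    {γ : Γ | ¬ ∀ t : K, w.v t = (γ : WithTop Γ) →
        φ.denom.eval t ≠ 0 ∧
          w.v (φ.num.eval t / φ.denom.eval t) = ((minvalRat w φ γ : Γ) : WithTop Γ)}.Finite := by
  apply Set.Finite.subset ((badSet_finite w φ.num).union (badSet_finite w φ.denom))
  intro γ hγ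
  by_contra hb
  apply hγ
  simp only [Set.mem_union] at hb
  push_neg at hb
  intro t ht
  have hnum := eval_v_eq w φ.num (RatFunc.num_ne_zero hφ) γ hb.1 t ht
  have hden := eval_v_eq w φ.denom φ.denom_ne_zero γ hb.2 t ht
  obtain ⟨A, hA⟩ := WithTop.ne_top_iff_exists.1 (minval_ne_top w φ.num (RatFunc.num_ne_zero hφ) γ)
  obtain ⟨B, hB⟩ := WithTop.ne_top_iff_exists.1 (minval_ne_top w φ.denom φ.denom_ne_zero γ)
  have hdne : φ.denom.eval t ≠ 0 := by
    intro h0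
    exact minval_ne_top w φ.denom φ.denom_ne_zero γ (by rw [← hden, h0, w.v_zero])
  refine ⟨hdne, ?_⟩
  have hinv : w.v ((φ.denom.eval t)⁻¹) = ((-B : Γ) : WithTop Γ) := by
    have h0 : w.v (φ.denom.eval t) + w.v ((φ.denom.eval t)⁻¹) = 0 := by
      rw [← w.v_mul, mul_inv_cancel₀ hdne, w.v_one]
    rw [hden, ← hB] at h0
    cases hx : w.v ((φ.denom.eval t)⁻¹) with
    | top => rw [hx] at h0; simp at h0
    | coe c =>
      rw [hx, ← WithTop.coe_add, ← WithTop.coe_zero, WithTop.coe_inj] at h0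
      exact WithTop.coe_inj.2 (eq_neg_of_add_eq_zero_right h0)
  have hq : w.v (φ.num.eval t / φ.denom.eval t) = ((A - B : Γ) : WithTop Γ) := by
    rw [div_eq_mul_inv, w.v_mul, hnum, ← hA, hinv, ← WithTop.coe_add, sub_eq_add_neg]
  rw [hq]
  congr 1
  unfold minvalRat
  rw [← hA, ← hB, WithTop.untopD_coe, WithTop.untopD_coe]
end

section
/- Let V be a valuation domain with field of fractions K, maximal ideal 𝔪, valuation v, and value group Γ, and suppose the residue field V/𝔪 is infinite. If φ_1, …, φ_m ∈ K(x) are finitely many nonzero rational functions, then for every γ ∈ Γ there exists a ∈ K with v(a) = γ such that each φ_i is defined at a and v(φ_i(a)) = minval_{φ_i}(γ) for all i = 1, …, m. -/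
open Polynomial

set_option synthInstance.maxHeartbeats 400000
set_option maxHeartbeats 1000000

variable {K : Type*} [Field K] {Γ : Type*} [AddCommGroup Γ] [LinearOrder Γ] [IsOrderedAddMonoid Γ]

namespace AddVal

variable (w : AddVal K Γ)

lemma v_zero_s10 : w.v 0 = ⊤ := (w.v_eq_top_iff 0).2 rfl

lemma v_ne_top {x : K} (hx : x ≠ 0) : w.v x ≠ ⊤ := fun h => hx ((w.v_eq_top_iff x).1 h)

lemma ne_zero_of_v_coe {x : K} {g : Γ} (hx : w.v x = (g : WithTop Γ)) : x ≠ 0 := by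
  intro h
  rw [h, w.v_zero_s10] at hx
  exact (WithTop.coe_ne_top hx.symm)

lemma v_inv_s10 {x : K} {g : Γ} (hx : w.v x = (g : WithTop Γ)) :
    w.v x⁻¹ = ((-g : Γ) : WithTop Γ) := by
  have hx0 : x ≠ 0 := w.ne_zero_of_v_coe hx
  have h := w.v_mul x x⁻¹
  rw [mul_inv_cancel₀ hx0, w.v_one, hx] at h
  cases hvi : w.v x⁻¹ with
  | top => rw [hvi] at h; simp at h
  | coe gi =>
      rw [hvi, ← WithTop.coe_add, ← WithTop.coe_zero] at h
      have h2 : g + gi = 0 := (WithTop.coe_injective h).symm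
      have h3 : gi = -g := by
        rw [eq_neg_iff_add_eq_zero, add_comm]; exact h2
      rw [h3]

lemma v_pow_s10 {c : K} {γ : Γ} (hc : w.v c = (γ : WithTop Γ)) (i : ℕ) :
    w.v (c ^ i) = ((i • γ : Γ) : WithTop Γ) := by
  induction i with
  | zero => simpa using w.v_one
  | succ n ih =>
      rw [pow_succ, w.v_mul, ih, hc, ← WithTop.coe_add, succ_nsmul]

end AddVal

lemma key_poly (w : AddVal K Γ) (V : Subring K) (hV : ∀ x : K, x ∈ V ↔ 0 ≤ w.v x)
    (m : Ideal ↥V) (hm : ∀ x : ↥V, x ∈ m ↔ 0 < w.v (x : K))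
    {γ : Γ} {c : K} (hc : w.v c = (γ : WithTop Γ)) {f : Polynomial K} (hf : f ≠ 0) :
    ∃ (μ : Γ) (q : Polynomial (↥V ⧸ m)), minval w f γ = (μ : WithTop Γ) ∧ q ≠ 0 ∧
      ∀ u : ↥V, q.eval (Ideal.Quotient.mk m u) ≠ 0 →
        w.v (f.eval (c * (u : K))) = (μ : WithTop Γ) := by
  set n := f.natDegree with hn
  -- the inf is attained and finite
  obtain ⟨i0, hi0mem, hi0⟩ := Finset.exists_mem_eq_inf (Finset.range (n + 1))
    ⟨0, Finset.mem_range.2 (Nat.succ_pos n)⟩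
    (fun i => w.v (f.coeff i) + ((i • γ : Γ) : WithTop Γ))
  have hminle : minval w f γ ≤ w.v (f.coeff n) + ((n • γ : Γ) : WithTop Γ) :=
    Finset.inf_le (Finset.mem_range.2 (Nat.lt_succ_self n))
  have hlead : f.coeff n ≠ 0 := by
    simpa [hn, Polynomial.coeff_natDegree] using Polynomial.leadingCoeff_ne_zero.2 hf
  have hfin : minval w f γ ≠ ⊤ := by
    intro h
    rw [h] at hminle
    have : w.v (f.coeff n) = ⊤ := by
      rcases (WithTop.add_eq_top.1 (top_le_iff.1 hminle)) with h' | h'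
      · exact h'
      · exact absurd h' (WithTop.coe_ne_top)
    exact w.v_ne_top hlead this
  obtain ⟨μ, hμ⟩ := WithTop.ne_top_iff_exists.1 hfin
  replace hμ : minval w f γ = (μ : WithTop Γ) := hμ.symm
  obtain ⟨b, hb⟩ := w.v_surj μ
  have hb0 : b ≠ 0 := w.ne_zero_of_v_coe hb
  set d : ℕ → K := fun i => f.coeff i * c ^ i / b with hd
  have hdv : ∀ i, w.v (d i) = w.v (f.coeff i) + ((i • γ : Γ) : WithTop Γ) + ((-μ : Γ) : WithTop Γ) := by
    intro i
    simp only [hd, div_eq_mul_inv]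
    rw [w.v_mul, w.v_mul, w.v_pow_s10 hc, w.v_inv_s10 hb]
  have hmemV : ∀ i, d i ∈ V := by
    intro i
    rw [hV, hdv]
    by_cases hci : f.coeff i = 0
    · rw [hci, w.v_zero_s10]; simp
    · have hile : i ∈ Finset.range (n + 1) :=
        Finset.mem_range.2 (Nat.lt_succ_of_le (Polynomial.le_natDegree_of_ne_zero hci))
      have hle : (μ : WithTop Γ) ≤ w.v (f.coeff i) + ((i • γ : Γ) : WithTop Γ) := by
        rw [← hμ]; exact Finset.inf_le hile
      calc (0 : WithTop Γ) = (μ : WithTop Γ) + ((-μ : Γ) : WithTop Γ) := by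
            rw [← WithTop.coe_add]; simp
        _ ≤ _ := add_le_add_left hle _
  set D : ℕ → ↥V := fun i => ⟨d i, hmemV i⟩ with hD
  set π := Ideal.Quotient.mk m with hπ
  set q : Polynomial (↥V ⧸ m) := ∑ i ∈ Finset.range (n + 1), Polynomial.C (π (D i)) * Polynomial.X ^ i with hq
  have hi0' : (μ : WithTop Γ) = w.v (f.coeff i0) + ((i0 • γ : Γ) : WithTop Γ) := by
    rw [← hμ]; exact hi0
  have hvd0 : w.v (d i0) = 0 := by
    rw [hdv i0, ← hi0', ← WithTop.coe_add]
    simp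
  have hqco : ∀ j ∈ Finset.range (n + 1), q.coeff j = π (D j) := by
    intro j hj
    rw [hq, Polynomial.finset_sum_coeff]
    simp only [Polynomial.coeff_C_mul, Polynomial.coeff_X_pow, mul_ite, mul_one, mul_zero]
    rw [Finset.sum_ite_eq (Finset.range (n+1)) j (fun i => π (D i))]
    simp [hj]
  have hq0 : q ≠ 0 := by
    intro h
    have h1 : q.coeff i0 = π (D i0) := hqco i0 hi0mem
    rw [h, Polynomial.coeff_zero] at h1
    have : D i0 ∈ m := (Ideal.Quotient.eq_zero_iff_mem).1 h1.symm
    rw [hm] at this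
    simp only [hD] at this
    rw [hvd0] at this
    exact lt_irrefl _ this
  refine ⟨μ, q, hμ, hq0, ?_⟩
  intro u hu
  set S : ↥V := ∑ i ∈ Finset.range (n + 1), D i * u ^ i with hS
  have hπS : π S = q.eval (π u) := by
    rw [hS, hq, map_sum π (fun i => D i * u ^ i) (Finset.range (n+1)), Polynomial.eval_finset_sum]
    refine Finset.sum_congr rfl fun i _ => ?_
    rw [map_mul, map_pow]
    simp
  have hSnm : S ∉ m := by
    intro hmem
    rw [← Ideal.Quotient.eq_zero_iff_mem, hπS] at hmem
    exact hu hmem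
  have hvS : w.v ((S : K)) = 0 := by
    have h1 : 0 ≤ w.v ((S : K)) := (hV _).1 S.2
    have h2 : ¬ 0 < w.v ((S : K)) := fun h => hSnm ((hm S).2 h)
    exact le_antisymm (not_lt.1 h2) h1
  have hScoe : ((S : K)) = ∑ i ∈ Finset.range (n + 1), d i * (u : K) ^ i := by
    rw [hS]
    push_cast
    rfl
  have heval : f.eval (c * (u : K)) = b * (S : K) := by
    rw [Polynomial.eval_eq_sum_range, hScoe, Finset.mul_sum, ← hn]
    refine Finset.sum_congr rfl fun i _ => ?_
    rw [hd]
    simp only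
    rw [mul_pow]
    field_simp
  rw [heval, w.v_mul, hvS, hb, add_zero]

/-- Suppose the residue field `V/𝔪` is infinite.  Given finitely many nonzero
rational functions `φ₁, …, φ_m ∈ K(x)` and `γ ∈ Γ`, there exists `a ∈ K` with `v(a) = γ` such
that each `φᵢ` is defined at `a` and `v(φᵢ(a)) = minval_{φᵢ}(γ)` for all `i`. -/
theorem statement10 (K : Type*) [Field K] (Γ : Type*) [AddCommGroup Γ] [LinearOrder Γ] [IsOrderedAddMonoid Γ]
    (w : AddVal K Γ)
    (V : Subring K) (hV : ∀ x : K, x ∈ V ↔ 0 ≤ w.v x)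
    (m : Ideal ↥V) (hm : ∀ x : ↥V, x ∈ m ↔ 0 < w.v (x : K))
    (hinf : Infinite (↥V ⧸ m))
    (mm : ℕ) (φ : Fin mm → RatFunc K) (hφ : ∀ i, φ i ≠ 0) (γ : Γ) :
    ∃ a : K, w.v a = (γ : WithTop Γ) ∧
      ∀ i, (φ i).denom.eval a ≠ 0 ∧
        w.v ((φ i).num.eval a / (φ i).denom.eval a)
          = ((minvalRat w (φ i) γ : Γ) : WithTop Γ) := by
  -- m is prime, so V/m is a domain
  haveI hprime : m.IsPrime := by
    constructor
    · rw [Ideal.ne_top_iff_one]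
      intro h1
      rw [hm] at h1
      simp only [OneMemClass.coe_one] at h1
      rw [w.v_one] at h1
      exact lt_irrefl _ h1
    · intro x y hxy
      rw [hm] at hxy
      push_cast at hxy
      rw [w.v_mul] at hxy
      by_contra hcon
      push_neg at hcon
      obtain ⟨hx, hy⟩ := hcon
      rw [hm] at hx hy
      have hx0 : w.v ((x : K)) = 0 := le_antisymm (not_lt.1 hx) ((hV _).1 x.2)
      have hy0 : w.v ((y : K)) = 0 := le_antisymm (not_lt.1 hy) ((hV _).1 y.2)
      rw [hx0, hy0, add_zero] at hxy
      exact lt_irrefl _ hxy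
  obtain ⟨c, hc⟩ := w.v_surj γ
  choose μn qn hμn hqn0 hevn using fun i =>
    key_poly w V hV m hm hc (RatFunc.num_ne_zero (hφ i))
  choose μd qd hμd hqd0 hevd using fun i =>
    key_poly w V hV m hm hc ((φ i).denom_ne_zero)
  set P : Polynomial (↥V ⧸ m) := Polynomial.X * ∏ i, (qn i * qd i) with hP
  have hP0 : P ≠ 0 := by
    rw [hP]
    refine mul_ne_zero Polynomial.X_ne_zero ((Finset.prod_ne_zero_iff (s := Finset.univ) (f := fun i => qn i * qd i)).2 fun i _ => ?_)
    exact mul_ne_zero (hqn0 i) (hqd0 i)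
  have hex : ∃ r : ↥V ⧸ m, P.eval r ≠ 0 := by
    by_contra h
    push_neg at h
    exact hP0 (Polynomial.zero_of_eval_zero P h)
  obtain ⟨r, hr⟩ := hex
  obtain ⟨u, hu⟩ := Ideal.Quotient.mk_surjective r
  rw [hP, Polynomial.eval_mul, Polynomial.eval_X, Polynomial.eval_prod] at hr
  have hr0 : r ≠ 0 := left_ne_zero_of_mul hr
  have hprod : ∀ i, (qn i).eval r ≠ 0 ∧ (qd i).eval r ≠ 0 := by
    intro i
    have h1 : (qn i * qd i).eval r ≠ 0 := by
      intro h
      apply right_ne_zero_of_mul hr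
      exact Finset.prod_eq_zero (Finset.mem_univ i) (by rw [Polynomial.eval_mul] at h ⊢; exact h)
    rw [Polynomial.eval_mul] at h1
    exact ⟨left_ne_zero_of_mul h1, right_ne_zero_of_mul h1⟩
  have hunm : u ∉ m := by
    intro h
    rw [← Ideal.Quotient.eq_zero_iff_mem] at h
    rw [hu] at h
    exact hr0 h
  have hvu : w.v ((u : K)) = 0 :=
    le_antisymm (not_lt.1 fun h => hunm ((hm u).2 h)) ((hV _).1 u.2)
  refine ⟨c * (u : K), ?_, ?_⟩
  · rw [w.v_mul, hvu, hc, add_zero]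
  intro i
  have hn := hevn i u (by rw [hu]; exact (hprod i).1)
  have hd := hevd i u (by rw [hu]; exact (hprod i).2)
  have hden0 : (φ i).denom.eval (c * (u : K)) ≠ 0 := by
    intro h
    rw [h, w.v_zero_s10] at hd
    exact WithTop.coe_ne_top hd.symm
  refine ⟨hden0, ?_⟩
  rw [div_eq_mul_inv, w.v_mul, hn, w.v_inv_s10 hd, ← WithTop.coe_add]
  unfold minvalRat
  rw [hμn i, hμd i]
  simp [sub_eq_add_neg]
end

section
/- Let V be a valuation domain with field of fractions K, maximal ideal 𝔪, valuation v, and value group Γ, and suppose Γ is not divisible. Let E be a subset of K and a ∈ E. Then the localization of IntR(E, V) at the pointed maximal ideal 𝔐_{𝔪,a} equals {φ ∈ K(x) : φ is defined at a and φ(a) ∈ V}; in particular, this localization is a valuation domain. -/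
open Polynomial

variable {K : Type*} [Field K] {Γ : Type*} [AddCommGroup Γ] [LinearOrder Γ] [IsOrderedAddMonoid Γ]

/-- `φ ∈ IntR(E, V)`: the rational function `φ` is defined at, and takes a value in `V` at,
every element of `E`. -/
def IntegerValuedOn (V : Subring K) (E : Set K) (φ : RatFunc K) : Prop :=
  ∀ e : K, e ∈ E → φ.denom.eval e ≠ 0 ∧ φ.num.eval e / φ.denom.eval e ∈ V

/-- Membership in the localization of `IntR(E, V)` at the pointed maximal ideal `𝔐_{𝔪,a}`
(viewed inside `K(x)`): `θ = φ/ψ` with `φ, ψ ∈ IntR(E, V)` and `ψ ∉ 𝔐_{𝔪,a}`, i.e.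
`v(ψ(a)) ≯ 0`. -/
def InLocalizationAt (w : AddVal K Γ) (V : Subring K) (E : Set K) (a : K) (θ : RatFunc K) :
    Prop :=
  ∃ φ ψ : RatFunc K, IntegerValuedOn V E φ ∧ IntegerValuedOn V E ψ ∧
    ¬ (0 < w.v (ψ.num.eval a / ψ.denom.eval a)) ∧ θ * ψ = φ

namespace St17

variable (w : AddVal K Γ)

lemma v_zero : w.v 0 = ⊤ := (w.v_eq_top_iff 0).2 rfl

lemma v_ne_top {x : K} (hx : x ≠ 0) : w.v x ≠ ⊤ := fun h => hx ((w.v_eq_top_iff x).1 h)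

lemma exists_coe {x : K} (hx : x ≠ 0) : ∃ g : Γ, w.v x = ↑g := by
  cases h : w.v x with
  | top => exact absurd h (v_ne_top w hx)
  | coe g => exact ⟨g, rfl⟩

lemma ne_zero_of_v_coe {x : K} {g : Γ} (h : w.v x = ↑g) : x ≠ 0 := by
  intro h0
  rw [h0, v_zero] at h
  exact (WithTop.coe_ne_top h.symm)

lemma v_div_add (x : K) {y : K} (hy : y ≠ 0) : w.v (x / y) + w.v y = w.v x := by
  rw [← w.v_mul, div_mul_cancel₀ x hy]

lemma v_div_nonneg {x y : K} (hy : y ≠ 0) (h : w.v y ≤ w.v x) : 0 ≤ w.v (x / y) := by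
  obtain ⟨g, hg⟩ := exists_coe w hy
  have h2 := v_div_add w x hy
  have h3 : (0 : WithTop Γ) + (g : WithTop Γ) ≤ w.v (x / y) + (g : WithTop Γ) := by
    rw [zero_add, ← hg, h2]; exact hg ▸ h
  exact (WithTop.add_le_add_iff_right (WithTop.coe_ne_top)).1 h3

lemma v_le_of_div_nonneg {x y : K} (hy : y ≠ 0) (h : 0 ≤ w.v (x / y)) : w.v y ≤ w.v x := by
  have h2 := v_div_add w x hy
  calc w.v y = 0 + w.v y := (zero_add _).symm
    _ ≤ w.v (x / y) + w.v y := add_le_add_left h _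
    _ = w.v x := h2

lemma v_div_eq_zero {x y : K} {g : Γ} (hy : y ≠ 0) (hx : w.v x = ↑g) (hyv : w.v y = ↑g) :
    w.v (x / y) = 0 := by
  have h2 := v_div_add w x hy
  rw [hyv, hx] at h2
  cases hvd : w.v (x / y) with
  | top => rw [hvd, top_add] at h2; exact absurd h2 (by simp)
  | coe c =>
    rw [hvd, ← WithTop.coe_add] at h2
    have hc : c + g = g := by exact_mod_cast h2
    have : c = 0 := by
      have := add_right_cancel (b := g) (by rw [hc, zero_add] : c + g = 0 + g)
      exact this
    rw [this, WithTop.coe_zero]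

lemma v_neg_one : w.v (-1 : K) = 0 := by
  have h := w.v_mul (-1) (-1)
  rw [neg_mul_neg, one_mul, w.v_one] at h
  cases hv : w.v (-1 : K) with
  | top => rw [hv, top_add] at h; exact absurd h.symm (by simp)
  | coe c =>
    rw [hv, ← WithTop.coe_add] at h
    have hc : c + c = 0 := by exact_mod_cast h.symm
    have hc0 : c = 0 := by
      rcases lt_trichotomy c 0 with h1 | h1 | h1
      · have := add_lt_add h1 h1
        rw [add_zero, hc] at this
        exact absurd this (lt_irrefl _)
      · exact h1
      · have := add_lt_add h1 h1
        rw [add_zero, hc] at this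
        exact absurd this (lt_irrefl _)
    rw [hc0, WithTop.coe_zero]

lemma v_neg (x : K) : w.v (-x) = w.v x := by
  have h := w.v_mul (-1) x
  rw [neg_one_mul, v_neg_one, zero_add] at h
  exact h

lemma v_add_eq_left {x y : K} (h : w.v x < w.v y) : w.v (x + y) = w.v x := by
  apply le_antisymm
  · have h2 : min (w.v (x + y)) (w.v (-y)) ≤ w.v (x + y + -y) := w.v_min_le_add _ _
    rw [add_neg_cancel_right, v_neg] at h2
    by_contra hc
    push_neg at hc
    exact absurd h2 (not_le.2 (lt_min hc h))
  · calc w.v x = min (w.v x) (w.v y) := (min_eq_left h.le).symm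
      _ ≤ w.v (x + y) := w.v_min_le_add x y

lemma v_pow {x : K} {g : Γ} (h : w.v x = ↑g) (k : ℕ) : w.v (x ^ k) = ↑(k • g) := by
  induction k with
  | zero => simp [pow_zero, w.v_one]
  | succ k ih => rw [pow_succ, w.v_mul, ih, h, ← WithTop.coe_add, succ_nsmul]

lemma le_v_pow {x : K} {s : Γ} (h : ↑s ≤ w.v x) (k : ℕ) : ↑(k • s) ≤ w.v (x ^ k) := by
  induction k with
  | zero => simp [pow_zero, w.v_one]
  | succ k ih =>
    rw [pow_succ, w.v_mul, succ_nsmul, WithTop.coe_add]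
    exact add_le_add ih h

lemma le_v_sum {ι : Type*} (s : Finset ι) (f : ι → K) (c : WithTop Γ)
    (h : ∀ i ∈ s, c ≤ w.v (f i)) : c ≤ w.v (∑ i ∈ s, f i) := by
  classical
  induction s using Finset.induction_on with
  | empty => simpa [v_zero w] using le_top
  | @insert a s ha ih =>
    rw [Finset.sum_insert ha]
    refine le_trans (le_min (h a (Finset.mem_insert_self _ _))
      (ih fun i hi => h i (Finset.mem_insert_of_mem hi))) (w.v_min_le_add _ _)

lemma exists_coe_le (x : WithTop Γ) : ∃ b : Γ, (b : WithTop Γ) ≤ x := by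
  cases x with
  | top => exact ⟨0, le_top⟩
  | coe g => exact ⟨g, le_rfl⟩

lemma eval_bound (P : Polynomial K) :
    ∃ β : Γ, ∀ s : Γ, s ≤ 0 → ∀ e : K, ↑s ≤ w.v e →
      ↑(β + P.natDegree • s) ≤ w.v (P.eval e) := by
  obtain ⟨β, hβ0⟩ := exists_coe_le ((Finset.range (P.natDegree + 1)).inf fun i => w.v (P.coeff i))
  have hβ : ∀ i ∈ Finset.range (P.natDegree + 1), (β : WithTop Γ) ≤ w.v (P.coeff i) :=
    fun i hi => le_trans hβ0 (Finset.inf_le hi)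
  refine ⟨β, fun s hs e he => ?_⟩
  rw [Polynomial.eval_eq_sum_range]
  apply le_v_sum
  intro i hi
  rw [w.v_mul]
  have hid : i ≤ P.natDegree := Nat.lt_succ_iff.1 (Finset.mem_range.1 hi)
  have h2 : P.natDegree • s ≤ i • s := by
    have heq : P.natDegree • s = i • s + (P.natDegree - i) • s := by
      rw [← add_nsmul, Nat.add_sub_cancel' hid]
    rw [heq]
    calc i • s + (P.natDegree - i) • s ≤ i • s + 0 := add_le_add_right (nsmul_nonpos hs _) _
      _ = i • s := add_zero _
  calc (↑(β + P.natDegree • s) : WithTop Γ) = ↑β + ↑(P.natDegree • s) := WithTop.coe_add _ _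
    _ ≤ w.v (P.coeff i) + ↑(i • s) :=
        add_le_add (hβ i hi) (WithTop.coe_le_coe.2 h2)
    _ ≤ w.v (P.coeff i) + w.v (e ^ i) := add_le_add_right (le_v_pow w he i) _

lemma ratfunc_div (p q : Polynomial K) (hq : q ≠ 0) (e : K) (he : q.eval e ≠ 0) :
    (algebraMap (Polynomial K) (RatFunc K) p / algebraMap _ _ q).denom.eval e ≠ 0 ∧
      (algebraMap (Polynomial K) (RatFunc K) p / algebraMap _ _ q).num.eval e /
        (algebraMap (Polynomial K) (RatFunc K) p / algebraMap _ _ q).denom.eval e =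
        p.eval e / q.eval e := by
  set r := algebraMap (Polynomial K) (RatFunc K) p / algebraMap _ _ q with hr
  have hdvd : r.denom ∣ q := (RatFunc.denom_dvd hq).2 ⟨p, rfl⟩
  obtain ⟨k, hk⟩ := hdvd
  have hcross : r.num * q = p * r.denom := by
    have h1 : algebraMap (Polynomial K) (RatFunc K) r.num / algebraMap _ _ r.denom
        = algebraMap (Polynomial K) (RatFunc K) p / algebraMap _ _ q := by
      rw [RatFunc.num_div_denom]
    have h2 := (div_eq_div_iff (RatFunc.algebraMap_ne_zero (RatFunc.denom_ne_zero r))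
      (RatFunc.algebraMap_ne_zero hq)).1 h1
    apply RatFunc.algebraMap_injective K
    rw [map_mul, map_mul]
    exact h2
  have hde : r.denom.eval e ≠ 0 := by
    intro h0
    apply he
    rw [hk, Polynomial.eval_mul, h0, zero_mul]
  refine ⟨hde, ?_⟩
  rw [div_eq_div_iff hde he]
  have h3 := congrArg (Polynomial.eval e) hcross
  rw [Polynomial.eval_mul, Polynomial.eval_mul] at h3
  exact h3

lemma cross_mul {θ ψ φ : RatFunc K} (h : θ * ψ = φ) :
    θ.num * ψ.num * φ.denom = φ.num * (θ.denom * ψ.denom) := by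
  have h1 : (algebraMap (Polynomial K) (RatFunc K) θ.num / algebraMap _ _ θ.denom) *
      (algebraMap (Polynomial K) (RatFunc K) ψ.num / algebraMap _ _ ψ.denom) =
      algebraMap (Polynomial K) (RatFunc K) φ.num / algebraMap _ _ φ.denom := by
    rw [RatFunc.num_div_denom, RatFunc.num_div_denom, RatFunc.num_div_denom]
    exact h
  rw [div_mul_div_comm] at h1
  have h2 := (div_eq_div_iff
    (mul_ne_zero (RatFunc.algebraMap_ne_zero (RatFunc.denom_ne_zero θ))
      (RatFunc.algebraMap_ne_zero (RatFunc.denom_ne_zero ψ)))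
    (RatFunc.algebraMap_ne_zero (RatFunc.denom_ne_zero φ))).1 h1
  apply RatFunc.algebraMap_injective K
  rw [map_mul, map_mul, map_mul, map_mul]
  exact h2

lemma num_eval_ne_zero (θ : RatFunc K) (a : K) (h : θ.denom.eval a = 0) :
    θ.num.eval a ≠ 0 := by
  obtain ⟨u, vv, huv⟩ := RatFunc.isCoprime_num_denom θ
  intro h0
  have h1 := congrArg (Polynomial.eval a) huv
  rw [Polynomial.eval_add, Polynomial.eval_mul, Polynomial.eval_mul, h, h0,
    Polynomial.eval_one, mul_zero, mul_zero, add_zero] at h1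
  exact zero_ne_one h1

lemma backward (V : Subring K) (hV : ∀ x : K, x ∈ V ↔ 0 ≤ w.v x)
    (n : ℕ) (hn : 2 ≤ n) (γ : Γ) (hγpos : 0 < γ) (hγ : ∀ δ : Γ, n • δ ≠ γ)
    (E : Set K) (a : K) (θ : RatFunc K) (hθ : θ ≠ 0)
    (hden : θ.denom.eval a ≠ 0) (hval : w.v (θ.denom.eval a) ≤ w.v (θ.num.eval a)) :
    InLocalizationAt w V E a θ := by
  classical
  set F := θ.num with hF_def
  set G := θ.denom with hG_def
  have hG : G ≠ 0 := θ.denom_ne_zero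
  set m := F.natDegree + G.natDegree + 1 with hm_def
  have hm1 : 1 ≤ m := by omega
  obtain ⟨vGa, hvGa⟩ := exists_coe w hden
  obtain ⟨μa, hμa⟩ := exists_coe_le (w.v a)
  set μ₀ := min μa 0 with hμ₀_def
  have hμ0 : μ₀ ≤ 0 := min_le_right _ _
  have hμ0a : (↑μ₀ : WithTop Γ) ≤ w.v a := le_trans (WithTop.coe_le_coe.2 (min_le_left _ _)) hμa
  obtain ⟨βF, hβF⟩ := eval_bound w F
  obtain ⟨βG, hβG⟩ := eval_bound w G
  obtain ⟨F₂, hF₂⟩ := X_sub_C_dvd_sub_C_eval (a := a) (p := F)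
  obtain ⟨G₂, hG₂⟩ := X_sub_C_dvd_sub_C_eval (a := a) (p := G)
  obtain ⟨βF₂, hβF₂⟩ := eval_bound w F₂
  obtain ⟨βG₂, hβG₂⟩ := eval_bound w G₂
  set LF₂ := βF₂ + F₂.natDegree • μ₀ with hLF₂'
  set LG₂ := βG₂ + G₂.natDegree • μ₀ with hLG₂'
  set ρ₁ := max 0 (max (vGa - LF₂) (vGa - LG₂)) with hρ₁_def
  have hρ₁0 : 0 ≤ ρ₁ := le_max_left _ _
  set LF := βF + F.natDegree • μ₀ with hLF'
  set LG := βG + G.natDegree • μ₀ with hLG'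
  set b := max (n • ρ₁ + max 0 (vGa - LF)) (max (n • ρ₁ + max 0 (vGa - LG))
    (max (max 0 (vGa - βF)) (max 0 (vGa - βG)))) with hb_def
  obtain ⟨Λ, hΛ0, hΛb, hΛnd⟩ : ∃ Λ : Γ, 0 ≤ Λ ∧ b ≤ Λ ∧ ∀ δ : Γ, n • δ ≠ Λ := by
    set t := max b 0 + max (-γ) 0 with ht_def
    have ht0 : 0 ≤ t := add_nonneg (le_max_right _ _) (le_max_right _ _)
    have htn : t ≤ n • t := by
      calc t = 1 • t := (one_nsmul t).symm
        _ ≤ n • t := nsmul_le_nsmul_left ht0 (by omega)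
    refine ⟨γ + n • t, add_nonneg hγpos.le (nsmul_nonneg ht0 n), ?_, ?_⟩
    · calc b = γ + (b + -γ) := by abel
        _ ≤ γ + t := add_le_add_right
            (add_le_add (le_max_left _ _) (le_max_left _ _)) γ
        _ ≤ γ + n • t := add_le_add_right htn γ
    · intro δ hδ
      exact hγ (δ - t) (by rw [nsmul_sub, hδ]; abel)
  obtain ⟨c, hc⟩ := w.v_surj Λ
  obtain ⟨d, hd⟩ := w.v_surj (m • Λ - vGa)
  have hcne : c ≠ 0 := ne_zero_of_v_coe w hc
  have hdne : d ≠ 0 := ne_zero_of_v_coe w hd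
  set q : Polynomial K := (X - C a) ^ n + C c with hq_def
  set Q : Polynomial K := q ^ m with hQ_def
  have hqeval : ∀ e : K, q.eval e = (e - a) ^ n + c := by
    intro e; simp [hq_def]
  have hq : ∀ e : K, ∃ gq : Γ, w.v (q.eval e) = ↑gq ∧ gq ≤ Λ ∧
      ∀ ρ : Γ, w.v (e - a) = ↑ρ → gq ≤ n • ρ := by
    intro e
    by_cases hea : e = a
    · refine ⟨Λ, ?_, le_rfl, ?_⟩
      · rw [hqeval, hea, sub_self, zero_pow (by omega : n ≠ 0), zero_add, hc]
      · intro ρ hρ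
        rw [hea, sub_self, v_zero] at hρ
        exact absurd hρ (by simp)
    · have hne : e - a ≠ 0 := sub_ne_zero.2 hea
      obtain ⟨ρ0, hρ0⟩ := exists_coe w hne
      have hpow : w.v ((e - a) ^ n) = ↑(n • ρ0) := v_pow w hρ0 n
      have huniq : ∀ ρ : Γ, w.v (e - a) = ↑ρ → ρ = ρ0 := by
        intro ρ hρ; rw [hρ0] at hρ; exact_mod_cast hρ.symm
      rcases lt_or_gt_of_ne (hΛnd ρ0) with hlt | hgt
      · have hlt' : w.v ((e - a) ^ n) < w.v c := by
          rw [hpow, hc]; exact_mod_cast hlt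
        refine ⟨n • ρ0, ?_, hlt.le, ?_⟩
        · rw [hqeval, v_add_eq_left w hlt', hpow]
        · intro ρ hρ; rw [huniq ρ hρ]
      · have hgt' : w.v c < w.v ((e - a) ^ n) := by
          rw [hpow, hc]; exact_mod_cast hgt
        refine ⟨Λ, ?_, le_rfl, ?_⟩
        · rw [hqeval, add_comm ((e - a) ^ n) c, v_add_eq_left w hgt', hc]
        · intro ρ hρ; rw [huniq ρ hρ]; exact hgt.le
  have hqne : ∀ e : K, q.eval e ≠ 0 := by
    intro e
    obtain ⟨gq, hgq, -, -⟩ := hq e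
    exact ne_zero_of_v_coe w hgq
  have hQeval : ∀ e : K, Q.eval e = (q.eval e) ^ m := by
    intro e; rw [hQ_def, Polynomial.eval_pow]
  have hQne : ∀ e : K, Q.eval e ≠ 0 := fun e => by
    rw [hQeval]; exact pow_ne_zero m (hqne e)
  have hQ0 : Q ≠ 0 := fun h => hQne a (by rw [h, Polynomial.eval_zero])
  have hΛm : Λ ≤ m • Λ := by
    calc Λ = 1 • Λ := (one_nsmul Λ).symm
      _ ≤ m • Λ := nsmul_le_nsmul_left hΛ0 hm1
  have main : ∀ (P : Polynomial K) (βP βP₂ : Γ) (P₂ : Polynomial K),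
      (∀ s : Γ, s ≤ 0 → ∀ e : K, ↑s ≤ w.v e → ↑(βP + P.natDegree • s) ≤ w.v (P.eval e)) →
      (∀ s : Γ, s ≤ 0 → ∀ e : K, ↑s ≤ w.v e → ↑(βP₂ + P₂.natDegree • s) ≤ w.v (P₂.eval e)) →
      P - C (P.eval a) = (X - C a) * P₂ →
      P.natDegree ≤ m * n →
      ((↑vGa : WithTop Γ) ≤ w.v (P.eval a)) →
      vGa - (βP₂ + P₂.natDegree • μ₀) ≤ ρ₁ →
      n • ρ₁ + max 0 (vGa - (βP + P.natDegree • μ₀)) ≤ Λ →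
      max 0 (vGa - βP) ≤ Λ →
      ∀ e : K, w.v (Q.eval e) + ↑vGa ≤ ↑(m • Λ) + w.v (P.eval e) := by
    intro P βP βP₂ P₂ hβP hβP₂ hP₂ hPdeg hPa hρ₁P hΛP1 hΛP2 e
    obtain ⟨gq, hgq, hgqΛ, hgqρ⟩ := hq e
    have hQe : w.v (Q.eval e) = ↑(m • gq) := by rw [hQeval]; exact v_pow w hgq m
    rcases le_or_gt (↑ρ₁ : WithTop Γ) (w.v (e - a)) with hnear | hfar
    · have hve : (↑μ₀ : WithTop Γ) ≤ w.v e := by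
        have he : e = a + (e - a) := by ring
        rw [he]
        refine le_trans (le_min hμ0a (le_trans ?_ hnear)) (w.v_min_le_add a (e - a))
        exact_mod_cast hμ0.trans hρ₁0
      have hP2e : (↑(βP₂ + P₂.natDegree • μ₀) : WithTop Γ) ≤ w.v (P₂.eval e) :=
        hβP₂ μ₀ hμ0 e hve
      have hPe : (↑vGa : WithTop Γ) ≤ w.v (P.eval e) := by
        have hrepr : P.eval e = P.eval a + (e - a) * P₂.eval e := by
          have h1 := congrArg (Polynomial.eval e) hP₂
          rw [Polynomial.eval_sub, Polynomial.eval_C, Polynomial.eval_mul,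
            Polynomial.eval_sub, Polynomial.eval_X, Polynomial.eval_C] at h1
          linear_combination h1
        rw [hrepr]
        refine le_trans (le_min hPa ?_) (w.v_min_le_add _ _)
        rw [w.v_mul]
        calc (↑vGa : WithTop Γ) ≤ ↑(ρ₁ + (βP₂ + P₂.natDegree • μ₀)) := by
              apply WithTop.coe_le_coe.2
              exact sub_le_iff_le_add.1 hρ₁P
          _ = ↑ρ₁ + ↑(βP₂ + P₂.natDegree • μ₀) := WithTop.coe_add _ _
          _ ≤ w.v (e - a) + w.v (P₂.eval e) := add_le_add hnear hP2e
      rw [hQe]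
      calc (↑(m • gq) : WithTop Γ) + ↑vGa ≤ ↑(m • Λ) + ↑vGa :=
            add_le_add_left (WithTop.coe_le_coe.2 (nsmul_le_nsmul_right hgqΛ m)) _
        _ ≤ ↑(m • Λ) + w.v (P.eval e) := add_le_add_right hPe _
    · obtain ⟨ρ, hρ⟩ : ∃ ρ : Γ, w.v (e - a) = ↑ρ := by
        cases hve : w.v (e - a) with
        | top => rw [hve] at hfar; exact absurd hfar (by simp)
        | coe ρ => exact ⟨ρ, rfl⟩
      have hρρ₁ : ρ < ρ₁ := by rw [hρ] at hfar; exact_mod_cast hfar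
      have hgqρ' : gq ≤ n • ρ := hgqρ ρ hρ
      rcases le_or_gt (↑μ₀ : WithTop Γ) (w.v e) with hcase | hcase
      · have hPe := hβP μ₀ hμ0 e hcase
        have hΓ : m • gq + vGa ≤ m • Λ + (βP + P.natDegree • μ₀) := by
          have h1 : gq ≤ n • ρ₁ := le_trans hgqρ' (nsmul_le_nsmul_right hρρ₁.le n)
          have h2 : m • gq ≤ m • (n • ρ₁) := nsmul_le_nsmul_right h1 m
          have h3 : m • (n • ρ₁) + m • max 0 (vGa - (βP + P.natDegree • μ₀)) ≤ m • Λ := by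
            rw [← nsmul_add]
            exact nsmul_le_nsmul_right hΛP1 m
          have h4 : vGa - (βP + P.natDegree • μ₀) ≤ m • max 0 (vGa - (βP + P.natDegree • μ₀)) := by
            calc vGa - (βP + P.natDegree • μ₀) ≤ max 0 (vGa - (βP + P.natDegree • μ₀)) :=
                  le_max_right _ _
              _ = 1 • max 0 (vGa - (βP + P.natDegree • μ₀)) := (one_nsmul _).symm
              _ ≤ m • max 0 (vGa - (βP + P.natDegree • μ₀)) :=
                  nsmul_le_nsmul_left (le_max_left _ _) hm1
          calc m • gq + vGa ≤ m • (n • ρ₁) + vGa := add_le_add_left h2 _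
            _ = m • (n • ρ₁) + (vGa - (βP + P.natDegree • μ₀)) + (βP + P.natDegree • μ₀) := by
                abel
            _ ≤ m • (n • ρ₁) + m • max 0 (vGa - (βP + P.natDegree • μ₀))
                  + (βP + P.natDegree • μ₀) :=
                add_le_add_left (add_le_add_right h4 _) _
            _ ≤ m • Λ + (βP + P.natDegree • μ₀) := add_le_add_left h3 _
        rw [hQe]
        calc (↑(m • gq) : WithTop Γ) + ↑vGa = ↑(m • gq + vGa) := (WithTop.coe_add _ _).symm
          _ ≤ ↑(m • Λ + (βP + P.natDegree • μ₀)) := WithTop.coe_le_coe.2 hΓ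
          _ = ↑(m • Λ) + ↑(βP + P.natDegree • μ₀) := WithTop.coe_add _ _
          _ ≤ ↑(m • Λ) + w.v (P.eval e) := add_le_add_right hPe _
      · obtain ⟨σ, hσ⟩ : ∃ σ : Γ, w.v e = ↑σ := by
          cases hve : w.v e with
          | top => rw [hve] at hcase; exact absurd hcase (by simp)
          | coe σ => exact ⟨σ, rfl⟩
        have hσμ : σ < μ₀ := by rw [hσ] at hcase; exact_mod_cast hcase
        have hσ0 : σ ≤ 0 := hσμ.le.trans hμ0
        have hρσ : ρ = σ := by
          have hlt : w.v e < w.v (-a) := by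
            rw [v_neg w a, hσ]
            exact lt_of_lt_of_le (by exact_mod_cast hσμ) hμ0a
          have h1 : w.v (e + -a) = w.v e := v_add_eq_left w hlt
          rw [← sub_eq_add_neg] at h1
          rw [hρ, hσ] at h1
          exact_mod_cast h1
        have hPe := hβP σ hσ0 e (le_of_eq hσ.symm)
        have hΓ : m • gq + vGa ≤ m • Λ + (βP + P.natDegree • σ) := by
          have h1 : m • gq ≤ m • (n • σ) := by
            rw [← hρσ]; exact nsmul_le_nsmul_right hgqρ' m
          have h2 : m • (n • σ) = (m * n) • σ := (mul_nsmul' σ m n).symm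
          have h3 : (m * n) • σ = P.natDegree • σ + (m * n - P.natDegree) • σ := by
            rw [← add_nsmul, Nat.add_sub_cancel' hPdeg]
          have h4 : (m * n - P.natDegree) • σ ≤ 0 := nsmul_nonpos hσ0 _
          have h5 : vGa - βP ≤ Λ := le_trans (le_max_right 0 _) hΛP2
          have h6 : vGa ≤ Λ + βP := sub_le_iff_le_add.1 h5
          calc m • gq + vGa ≤ m • (n • σ) + vGa := add_le_add_left h1 _
            _ = P.natDegree • σ + (m * n - P.natDegree) • σ + vGa := by rw [h2, h3]
            _ ≤ P.natDegree • σ + 0 + vGa := add_le_add_left (add_le_add_right h4 _) _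
            _ = P.natDegree • σ + vGa := by rw [add_zero]
            _ ≤ P.natDegree • σ + (Λ + βP) := add_le_add_right h6 _
            _ ≤ P.natDegree • σ + (m • Λ + βP) :=
                add_le_add_right (add_le_add_left hΛm _) _
            _ = m • Λ + (βP + P.natDegree • σ) := by abel
        rw [hQe]
        calc (↑(m • gq) : WithTop Γ) + ↑vGa = ↑(m • gq + vGa) := (WithTop.coe_add _ _).symm
          _ ≤ ↑(m • Λ + (βP + P.natDegree • σ)) := WithTop.coe_le_coe.2 hΓ
          _ = ↑(m • Λ) + ↑(βP + P.natDegree • σ) := WithTop.coe_add _ _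
          _ ≤ ↑(m • Λ) + w.v (P.eval e) := add_le_add_right hPe _
  have hmn : m ≤ m * n := Nat.le_mul_of_pos_right m (by omega)
  have hdegF : F.natDegree ≤ m * n := le_trans (by omega) hmn
  have hdegG : G.natDegree ≤ m * n := le_trans (by omega) hmn
  have hFa : (↑vGa : WithTop Γ) ≤ w.v (F.eval a) := hvGa ▸ hval
  have hGaa : (↑vGa : WithTop Γ) ≤ w.v (G.eval a) := le_of_eq hvGa.symm
  have hρ₁F : vGa - LF₂ ≤ ρ₁ := le_trans (le_trans (le_max_left _ _) (le_max_right _ _)) le_rfl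
  have hρ₁G : vGa - LG₂ ≤ ρ₁ := le_trans (le_trans (le_max_right _ _) (le_max_right _ _)) le_rfl
  have hΛF1 : n • ρ₁ + max 0 (vGa - LF) ≤ Λ := le_trans (le_max_left _ _) hΛb
  have hΛG1 : n • ρ₁ + max 0 (vGa - LG) ≤ Λ :=
    le_trans (le_trans (le_max_left _ _) (le_max_right _ _)) hΛb
  have hΛF2 : max 0 (vGa - βF) ≤ Λ :=
    le_trans (le_trans (le_trans (le_max_left _ _) (le_max_right _ _)) (le_max_right _ _)) hΛb
  have hΛG2 : max 0 (vGa - βG) ≤ Λ :=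
    le_trans (le_trans (le_trans (le_max_right _ _) (le_max_right _ _)) (le_max_right _ _)) hΛb
  have mainF := main F βF βF₂ F₂ hβF hβF₂ hF₂ hdegF hFa hρ₁F hΛF1 hΛF2
  have mainG := main G βG βG₂ G₂ hβG hβG₂ hG₂ hdegG hGaa hρ₁G hΛG1 hΛG2
  have hvmul : ∀ (P : Polynomial K), (∀ e : K, w.v (Q.eval e) + ↑vGa ≤ ↑(m • Λ) + w.v (P.eval e)) →
      ∀ e : K, w.v (Q.eval e) ≤ w.v ((C d * P).eval e) := by
    intro P hmain e
    have h2 : (C d * P).eval e = d * P.eval e := by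
      rw [Polynomial.eval_mul, Polynomial.eval_C]
    rw [h2, w.v_mul, hd]
    have h3 : w.v (Q.eval e) + ↑vGa ≤ (↑(m • Λ - vGa) + w.v (P.eval e)) + ↑vGa := by
      calc w.v (Q.eval e) + ↑vGa ≤ ↑(m • Λ) + w.v (P.eval e) := hmain e
        _ = (↑(m • Λ - vGa) + w.v (P.eval e)) + ↑vGa := by
            rw [add_right_comm, ← WithTop.coe_add, sub_add_cancel]
    exact (WithTop.add_le_add_iff_right WithTop.coe_ne_top).1 h3
  have hvmulF := hvmul F mainF
  have hvmulG := hvmul G mainG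
  refine ⟨algebraMap (Polynomial K) (RatFunc K) (C d * F) / algebraMap _ _ Q,
    algebraMap (Polynomial K) (RatFunc K) (C d * G) / algebraMap _ _ Q, ?_, ?_, ?_, ?_⟩
  · intro e he
    obtain ⟨h1, h2⟩ := ratfunc_div (C d * F) Q hQ0 e (hQne e)
    refine ⟨h1, ?_⟩
    rw [h2]
    exact (hV _).2 (v_div_nonneg w (hQne e) (hvmulF e))
  · intro e he
    obtain ⟨h1, h2⟩ := ratfunc_div (C d * G) Q hQ0 e (hQne e)
    refine ⟨h1, ?_⟩
    rw [h2]
    exact (hV _).2 (v_div_nonneg w (hQne e) (hvmulG e))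
  · obtain ⟨h1, h2⟩ := ratfunc_div (C d * G) Q hQ0 a (hQne a)
    rw [h2]
    have hvda : w.v ((C d * G).eval a) = ↑(m • Λ) := by
      rw [Polynomial.eval_mul, Polynomial.eval_C, w.v_mul, hd, hvGa, ← WithTop.coe_add,
        sub_add_cancel]
    have hvQa : w.v (Q.eval a) = ↑(m • Λ) := by
      rw [hQeval]
      have hqa : w.v (q.eval a) = ↑Λ := by
        rw [hqeval, sub_self, zero_pow (by omega : n ≠ 0), zero_add, hc]
      exact v_pow w hqa m
    rw [v_div_eq_zero w (hQne a) hvda hvQa]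
    simp
  · have hθeq : θ = algebraMap (Polynomial K) (RatFunc K) F / algebraMap _ _ G :=
      (RatFunc.num_div_denom θ).symm
    rw [hθeq, div_mul_div_comm, div_eq_div_iff
      (mul_ne_zero (RatFunc.algebraMap_ne_zero hG) (RatFunc.algebraMap_ne_zero hQ0))
      (RatFunc.algebraMap_ne_zero hQ0), ← map_mul, ← map_mul, ← map_mul, ← map_mul]
    exact congrArg _ (by ring)

end St17

/-- Suppose the value group `Γ` is not divisible.  Let `E ⊆ K` and `a ∈ E`.
Then the localization of `IntR(E, V)` at the pointed maximal ideal `𝔐_{𝔪,a}` equals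
`{φ ∈ K(x) : φ defined at a and φ(a) ∈ V}`; in particular, this localization is a valuation
domain. -/
theorem statement17 (K : Type*) [Field K] (Γ : Type*) [AddCommGroup Γ] [LinearOrder Γ] [IsOrderedAddMonoid Γ]
    (w : AddVal K Γ)
    (V : Subring K) (hV : ∀ x : K, x ∈ V ↔ 0 ≤ w.v x)
    (hnd : ¬ ∀ (γ : Γ) (n : ℤ), n ≠ 0 → ∃ δ : Γ, n • δ = γ)
    (E : Set K) (a : K) (ha : a ∈ E) :
    (∀ θ : RatFunc K,
      InLocalizationAt w V E a θ ↔
        (θ.denom.eval a ≠ 0 ∧ θ.num.eval a / θ.denom.eval a ∈ V)) ∧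
    ∀ θ : RatFunc K, InLocalizationAt w V E a θ ∨ InLocalizationAt w V E a θ⁻¹ := by
  classical
  push_neg at hnd
  obtain ⟨γ0, n0, hn0, hγ0⟩ := hnd
  set n := n0.natAbs with hn_def
  have hn2 : 2 ≤ n := by
    rcases Nat.lt_or_ge n 2 with h | h
    · exfalso
      have h01 : n = 0 ∨ n = 1 := by omega
      rcases h01 with h1 | h1
      · exact hn0 (Int.natAbs_eq_zero.1 h1)
      · rcases Int.natAbs_eq n0 with h2 | h2
        · exact hγ0 γ0 (by rw [h2, ← hn_def, h1]; simp)
        · exact hγ0 (-γ0) (by rw [h2, ← hn_def, h1]; simp)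
    · exact h
  set γ := |γ0| with hγ_def
  have hγpos : 0 < γ := abs_pos.2 (by
    intro h0; exact hγ0 0 (by rw [h0, smul_zero]))
  have hγnd : ∀ δ : Γ, n • δ ≠ γ := by
    intro δ hδ
    rcases Int.natAbs_eq n0 with h2 | h2 <;> rcases abs_choice γ0 with h3 | h3
    · exact hγ0 δ (by rw [h2, natCast_zsmul, ← hn_def, hδ, hγ_def, h3])
    · exact hγ0 (-δ) (by
        rw [h2, natCast_zsmul, ← hn_def, smul_neg, hδ, hγ_def, h3, neg_neg])
    · exact hγ0 (-δ) (by
        rw [h2, neg_zsmul, natCast_zsmul, ← hn_def, smul_neg, neg_neg, hδ, hγ_def, h3])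
    · exact hγ0 δ (by
        rw [h2, neg_zsmul, natCast_zsmul, ← hn_def, hδ, hγ_def, h3, neg_neg])
  have fwd : ∀ θ : RatFunc K, InLocalizationAt w V E a θ →
      θ.denom.eval a ≠ 0 ∧ θ.num.eval a / θ.denom.eval a ∈ V := by
    rintro θ ⟨φ, ψ, hφ, hψ, hunit, heq⟩
    obtain ⟨hψd, hψv⟩ := hψ a ha
    obtain ⟨hφd, hφv⟩ := hφ a ha
    have hψ0 : w.v (ψ.num.eval a / ψ.denom.eval a) = 0 :=
      le_antisymm (not_lt.1 hunit) ((hV _).1 hψv)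
    have hψratne : ψ.num.eval a / ψ.denom.eval a ≠ 0 := by
      intro h0
      rw [h0, St17.v_zero w] at hψ0
      exact (by simp : (⊤ : WithTop Γ) ≠ 0) hψ0
    have hψn : ψ.num.eval a ≠ 0 := fun h0 => hψratne (by rw [h0, zero_div])
    have hcross := St17.cross_mul heq
    have hcre := congrArg (Polynomial.eval a) hcross
    simp only [Polynomial.eval_mul] at hcre
    have hθd : θ.denom.eval a ≠ 0 := by
      intro h0
      have hθn := St17.num_eval_ne_zero θ a h0
      rw [h0, zero_mul, mul_zero] at hcre
      exact (mul_ne_zero (mul_ne_zero hθn hψn) hφd) hcre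
    refine ⟨hθd, (hV _).2 ?_⟩
    apply St17.v_div_nonneg w hθd
    obtain ⟨gψn, hgψn⟩ := St17.exists_coe w hψn
    obtain ⟨gψd, hgψd⟩ := St17.exists_coe w hψd
    obtain ⟨gφd, hgφd⟩ := St17.exists_coe w hφd
    obtain ⟨gθd, hgθd⟩ := St17.exists_coe w hθd
    have hψeq : (gψn : WithTop Γ) = ↑gψd := by
      have hh := St17.v_div_add w (ψ.num.eval a) hψd
      rw [hψ0, zero_add] at hh
      rw [hgψd, hgψn] at hh
      exact hh.symm
    have hφval : (gφd : WithTop Γ) ≤ w.v (φ.num.eval a) := by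
      rw [← hgφd]
      exact St17.v_le_of_div_nonneg w hφd ((hV _).1 hφv)
    have hv := congrArg w.v hcre
    rw [w.v_mul, w.v_mul, w.v_mul, w.v_mul] at hv
    rw [hgψn, hgφd, hgθd, hgψd] at hv
    rw [hgθd]
    have key : w.v (θ.num.eval a) + ((↑gψn : WithTop Γ) + ↑gφd)
        = w.v (φ.num.eval a) + (↑gθd + ↑gψd) := by
      rw [← add_assoc]; exact hv
    have key2 : (↑gθd : WithTop Γ) + (↑gψn + ↑gφd)
        ≤ w.v (θ.num.eval a) + (↑gψn + ↑gφd) := by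
      rw [key]
      have hre : (↑gθd : WithTop Γ) + (↑gψn + ↑gφd) = ↑gφd + (↑gθd + ↑gψd) := by
        rw [hψeq]; abel
      rw [hre]
      exact add_le_add_left hφval _
    exact (WithTop.add_le_add_iff_right (by
      rw [← WithTop.coe_add]; exact WithTop.coe_ne_top)).1 key2
  have bwd : ∀ θ : RatFunc K, θ.denom.eval a ≠ 0 → θ.num.eval a / θ.denom.eval a ∈ V →
      InLocalizationAt w V E a θ := by
    intro θ hd hv'
    by_cases hθ0 : θ = 0
    · refine ⟨0, 1, ?_, ?_, ?_, by rw [hθ0, zero_mul]⟩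
      · intro e he
        rw [RatFunc.num_zero, RatFunc.denom_zero]
        exact ⟨by simp, by simpa using V.zero_mem⟩
      · intro e he
        rw [RatFunc.num_one, RatFunc.denom_one]
        exact ⟨by simp, by simpa using V.one_mem⟩
      · rw [RatFunc.num_one, RatFunc.denom_one]
        simp only [Polynomial.eval_one]
        rw [div_one, w.v_one]
        simp
    · exact St17.backward w V hV n hn2 γ hγpos hγnd E a θ hθ0 hd
        (St17.v_le_of_div_nonneg w hd ((hV _).1 hv'))
  constructor
  · intro θ
    exact ⟨fwd θ, fun h => bwd θ h.1 h.2⟩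
  · intro θ
    by_cases h : θ.denom.eval a ≠ 0 ∧ θ.num.eval a / θ.denom.eval a ∈ V
    · exact Or.inl (bwd θ h.1 h.2)
    · right
      have hθ0 : θ ≠ 0 := by
        intro h0
        apply h
        rw [h0, RatFunc.num_zero, RatFunc.denom_zero, Polynomial.eval_one]
        exact ⟨one_ne_zero, by simpa using V.zero_mem⟩
      have hnum_ne : θ.num ≠ 0 := RatFunc.num_ne_zero hθ0
      have hinv : θ⁻¹ = algebraMap (Polynomial K) (RatFunc K) θ.denom
          / algebraMap _ _ θ.num := by
        conv_lhs => rw [← RatFunc.num_div_denom θ]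
        rw [inv_div]
      by_cases hda : θ.denom.eval a = 0
      · have hna : θ.num.eval a ≠ 0 := St17.num_eval_ne_zero θ a hda
        obtain ⟨h1, h2⟩ := St17.ratfunc_div θ.denom θ.num hnum_ne a hna
        rw [← hinv] at h1 h2
        refine bwd _ h1 ?_
        rw [h2, hda, zero_div]
        exact V.zero_mem
      · have hv2 : ¬ (θ.num.eval a / θ.denom.eval a ∈ V) := by
          intro hmem
          exact h ⟨hda, hmem⟩
        have hna : θ.num.eval a ≠ 0 := by
          intro h0
          apply hv2
          rw [h0, zero_div]
          exact V.zero_mem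
        obtain ⟨h1, h2⟩ := St17.ratfunc_div θ.denom θ.num hnum_ne a hna
        rw [← hinv] at h1 h2
        refine bwd _ h1 ?_
        rw [h2]
        apply (hV _).2
        apply St17.v_div_nonneg w hna
        by_contra hcon
        push_neg at hcon
        apply hv2
        apply (hV _).2
        exact St17.v_div_nonneg w hda hcon.le
end
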